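/- arXiv:1112.1045 — 5 statements merged into one kernel-verified Lean document; each statement's English description precedes it below -/
import Mathlib

section
/- Let n1, n2, r, m, k1, k2, k2' be natural numbers and ε ∈ (0,1). Let TExt : {0,1}^{n1} × {0,1}^{n2} → {0,1}^m be a function and A_1, ..., A_r : {0,1}^{n2} → {0,1}^{n2} be r functions such that for every (n1,k1)-source X and every independent (n2,k2)-source Y, the joint distribution (TExt(X,Y), (TExt(X,A_i(Y)))_{i=1..r}) is ε-close to (U_m, (TExt(X,A_i(Y)))_{i=1..r}). Then for every (n1,k1)-source X and every (n2,k2')-source Y' independent of X, the joint distribution (TExt(X,Y'), (TExt(X,A_i(Y')))_{i=1..r}, Y') is 2^{(r+1)m}·(2^{k2−k2'+1}+ε)-close to (U_m, (TExt(X,A_i(Y')))_{i=1..r}, Y'). -/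
/-!
Fix an outcome `(w, v)` and let
`g y = Pr[(TExt X y, (TExt X (A i y))ᵢ) = (w, v)] - 2⁻ᵐ Pr[(TExt X (A i y))ᵢ = v]`,
so that `|g| ≤ 1`. The hypothesis says that `g` averages to at most `2ε` in absolute value
against every `k2`-source. Averaging against the flat source on `{g > 2ε}` (resp. `{g < -2ε}`)
shows that each of these sets has at most `2 ^ k2` points, so a `k2'`-source gives them mass at
most `2 * 2 ^ (k2 - k2')`, and `E |g Y'| ≤ 2 * 2 ^ (k2 - k2') + 2ε`. The statistical distance
with the seed attached is half the sum of these expectations over the `2 ^ ((r + 1) m)` outcomes.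
-/

open Finset
open scoped Classical

noncomputable section

abbrev BS (n : ℕ) := Fin n → Bool

def uniformD (α : Type*) [Fintype α] : α → ℝ := fun _ => (Fintype.card α : ℝ)⁻¹

def prodD {α β : Type*} (p : α → ℝ) (q : β → ℝ) : α × β → ℝ := fun z => p z.1 * q z.2

def pushD {α β : Type*} [Fintype α] (f : α → β) (p : α → ℝ) : β → ℝ :=
  fun b => ∑ a, if f a = b then p a else 0

def SD {α : Type*} [Fintype α] (p q : α → ℝ) : ℝ := (∑ a, |p a - q a|) / 2

def IsDist {α : Type*} [Fintype α] (p : α → ℝ) : Prop := (∀ a, 0 ≤ p a) ∧ ∑ a, p a = 1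

def mEntGe {α : Type*} (p : α → ℝ) (k : ℝ) : Prop := ∀ a, p a ≤ (2:ℝ) ^ (-k)

def IsNME {X Y M : Type*} [Fintype X] [Fintype Y] [Fintype M]
    (E : X → Y → M) (k ε : ℝ) : Prop :=
  ∀ μX : X → ℝ, IsDist μX → mEntGe μX k →
    ∀ A : Y → Y, (∀ y, A y ≠ y) →
      SD (pushD (fun xy : X × Y => (E xy.1 xy.2, E xy.1 (A xy.2), xy.2)) (prodD μX (uniformD Y)))
         (prodD (uniformD M)
           (pushD (fun xy : X × Y => (E xy.1 (A xy.2), xy.2)) (prodD μX (uniformD Y)))) ≤ ε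

def IsNMEr {X Y M : Type*} [Fintype X] [Fintype Y] [Fintype M]
    (r : ℕ) (E : X → Y → M) (k ε : ℝ) : Prop :=
  ∀ μX : X → ℝ, IsDist μX → mEntGe μX k →
    ∀ A : Fin r → Y → Y, (∀ i y, A i y ≠ y) →
      SD (pushD (fun xy : X × Y =>
            (E xy.1 xy.2, fun i => E xy.1 (A i xy.2), xy.2)) (prodD μX (uniformD Y)))
         (prodD (uniformD M)
           (pushD (fun xy : X × Y =>
             ((fun i => E xy.1 (A i xy.2)), xy.2)) (prodD μX (uniformD Y)))) ≤ ε

lemma abs_sub_le_two_mul_SD {α : Type*} [Fintype α] (p q : α → ℝ) (a : α) :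
    |p a - q a| ≤ 2 * SD p q := by
  rw [SD, mul_div_cancel₀ _ two_ne_zero]
  exact single_le_sum (f := fun a => |p a - q a|) (fun _ _ => abs_nonneg _) (mem_univ a)

section PushForward

variable {α β : Type*} [Fintype α]

lemma pushD_nonneg {μ : α → ℝ} (hμ : ∀ a, 0 ≤ μ a) (f : α → β) (b : β) : 0 ≤ pushD f μ b :=
  sum_nonneg fun a _ => by split_ifs <;> simp [hμ a]

lemma pushD_le_one {μ : α → ℝ} (hμ : IsDist μ) (f : α → β) (b : β) : pushD f μ b ≤ 1 :=
  hμ.2 ▸ sum_le_sum fun a _ => by split_ifs <;> simp [hμ.1 a]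

variable {γ : Type*} [Fintype γ]

lemma pushD_prodD_apply (F : α → γ → β) (μ : α → ℝ) (ν : γ → ℝ) (b : β) :
    pushD (fun xy : α × γ => F xy.1 xy.2) (prodD μ ν) b
      = ∑ y, ν y * pushD (fun x => F x y) μ b := by
  simp only [pushD, prodD, Fintype.sum_prod_type, mul_sum, mul_ite, mul_zero]
  rw [sum_comm]
  simp only [mul_comm]

lemma pushD_prodD_apply_of_leftInverse (F : α → γ → β) (S : β → γ)
    (hS : ∀ x y, S (F x y) = y) (μ : α → ℝ) (ν : γ → ℝ) (b : β) :
    pushD (fun xy : α × γ => F xy.1 xy.2) (prodD μ ν) b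
      = ν (S b) * pushD (fun x => F x (S b)) μ b := by
  rw [pushD_prodD_apply, sum_eq_single (S b)]
  · intro y _ hy
    refine mul_eq_zero_of_right _ (sum_eq_zero fun x _ => if_neg ?_)
    rintro rfl
    exact hy (hS x y).symm
  · simp

end PushForward

section FlatSource

variable {Y : Type*}

def flatD (B : Finset Y) : Y → ℝ := fun y => if y ∈ B then (#B : ℝ)⁻¹ else 0

lemma isDist_flatD [Fintype Y] {B : Finset Y} (hB : B.Nonempty) : IsDist (flatD B) := by
  refine ⟨fun y => by unfold flatD; positivity, ?_⟩
  simp only [flatD, sum_ite_mem, univ_inter, sum_const, nsmul_eq_mul]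
  exact mul_inv_cancel₀ (by exact_mod_cast hB.card_pos.ne')

lemma mEntGe_flatD {B : Finset Y} {k : ℝ} (hk : (2:ℝ) ^ k ≤ #B) : mEntGe (flatD B) k := by
  intro y
  unfold flatD
  split_ifs
  · rw [Real.rpow_neg zero_le_two]
    exact inv_anti₀ (by positivity) hk
  · positivity

lemma sum_flatD_mul [Fintype Y] (B : Finset Y) (h : Y → ℝ) :
    ∑ y, flatD B y * h y = (#B : ℝ)⁻¹ * ∑ y ∈ B, h y := by
  simp only [flatD, ite_mul, zero_mul, sum_ite_mem, univ_inter, mul_sum]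

lemma card_filter_lt_le_of_forall_source [Fintype Y] {h : Y → ℝ} {k δ : ℝ}
    (H : ∀ ν : Y → ℝ, IsDist ν → mEntGe ν k → ∑ y, ν y * h y ≤ δ) :
    (#{y | δ < h y} : ℝ) ≤ 2 ^ k := by
  set B : Finset Y := {y | δ < h y}
  by_contra! hB
  have hBpos : (0:ℝ) < #B := (Real.rpow_pos_of_pos two_pos k).trans hB
  have hne : B.Nonempty := card_pos.mp (by exact_mod_cast hBpos)
  have hlt : (#B : ℝ) * δ < ∑ y ∈ B, h y := by
    simpa using sum_lt_sum_of_nonempty hne fun y hy => (mem_filter.mp hy).2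
  have hle := H (flatD B) (isDist_flatD hne) (mEntGe_flatD hB.le)
  rw [sum_flatD_mul, inv_mul_le_iff₀ hBpos] at hle
  linarith

lemma sum_mul_abs_le_of_forall_source [Fintype Y] {h : Y → ℝ} {k k' δ : ℝ} (hδ : 0 ≤ δ)
    (h_one : ∀ y, |h y| ≤ 1)
    (H : ∀ ν : Y → ℝ, IsDist ν → mEntGe ν k → |∑ y, ν y * h y| ≤ δ)
    {μ : Y → ℝ} (hμ : IsDist μ) (hμk : mEntGe μ k') :
    ∑ y, μ y * |h y| ≤ 2 * 2 ^ (k - k') + δ := by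
  set B : Finset Y := {y | δ < |h y|}
  have hB : (#B : ℝ) ≤ 2 * 2 ^ k := by
    have hpos := card_filter_lt_le_of_forall_source fun ν hν hνk =>
      (le_abs_self _).trans (H ν hν hνk)
    have hneg := card_filter_lt_le_of_forall_source (h := fun y => -h y) fun ν hν hνk => by
      simpa only [mul_neg, sum_neg_distrib, abs_neg] using (neg_le_abs _).trans (H ν hν hνk)
    have hunion : #B ≤ #{y | δ < h y} + #{y | δ < -h y} := by
      simp only [B, lt_abs, filter_or]
      exact card_union_le _ _
    have : (#B : ℝ) ≤ #{y | δ < h y} + #{y | δ < -h y} := by exact_mod_cast hunion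
    linarith
  have hpoint : ∀ y, μ y * |h y| ≤ (if y ∈ B then (2:ℝ) ^ (-k') else 0) + μ y * δ := by
    intro y
    have hμy := hμ.1 y
    split_ifs with hy
    · nlinarith [hμk y, h_one y, abs_nonneg (h y)]
    · have : |h y| ≤ δ := by simpa [B] using hy
      simpa using mul_le_mul_of_nonneg_left this hμy
  calc ∑ y, μ y * |h y| ≤ ∑ y, ((if y ∈ B then (2:ℝ) ^ (-k') else 0) + μ y * δ) :=
        sum_le_sum fun y _ => hpoint y
    _ = #B * 2 ^ (-k') + δ := by
        rw [sum_add_distrib, sum_ite_mem, univ_inter, sum_const, nsmul_eq_mul, ← sum_mul, hμ.2,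
          one_mul]
    _ ≤ 2 * 2 ^ k * 2 ^ (-k') + δ := by gcongr
    _ = 2 * 2 ^ (k - k') + δ := by rw [sub_eq_add_neg, Real.rpow_add two_pos]; ring

end FlatSource

theorem SD_seed_eq_sum {X Y W V : Type*} [Fintype X] [Fintype Y] [Fintype W] [Fintype V]
    (E : X → Y → W) (f : X → Y → V) (μX : X → ℝ) {μY : Y → ℝ} (hμY : ∀ y, 0 ≤ μY y) :
    SD (pushD (fun xy : X × Y => (E xy.1 xy.2, f xy.1 xy.2, xy.2)) (prodD μX μY))
       (prodD (uniformD W) (pushD (fun xy : X × Y => (f xy.1 xy.2, xy.2)) (prodD μX μY)))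
      = (∑ wv : W × V, ∑ y, μY y * |pushD (fun x => (E x y, f x y)) μX wv
          - (Fintype.card W : ℝ)⁻¹ * pushD (fun x => f x y) μX wv.2|) / 2 := by
  rw [SD, ← (Equiv.prodAssoc W V Y).sum_comp, Fintype.sum_prod_type]
  congr 1
  refine sum_congr rfl fun wv _ => sum_congr rfl fun y _ => ?_
  rw [Equiv.prodAssoc_apply, prodD,
    pushD_prodD_apply_of_leftInverse (fun x y => (E x y, f x y, y)) (fun b => b.2.2)
      (fun _ _ => rfl),
    pushD_prodD_apply_of_leftInverse (fun x y => (f x y, y)) Prod.snd (fun _ _ => rfl)]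
  have hjoint : pushD (fun x => (E x y, f x y, y)) μX (wv.1, wv.2, y)
      = pushD (fun x => (E x y, f x y)) μX wv := by
    simp only [pushD, Prod.ext_iff, and_true]
  have hmarg : pushD (fun x => (f x y, y)) μX (wv.2, y) = pushD (fun x => f x y) μX wv.2 := by
    simp only [pushD, Prod.mk.injEq, and_true]
  rw [hjoint, hmarg, show ∀ a b : ℝ, μY y * a - uniformD W wv.1 * (μY y * b)
      = μY y * (a - (Fintype.card W : ℝ)⁻¹ * b) from fun _ _ => by rw [uniformD]; ring,
    abs_mul, abs_of_nonneg (hμY y)]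

theorem SD_seed_le_of_forall_source {X Y W V : Type*} [Fintype X] [Fintype Y] [Fintype W]
    [Fintype V] [Nonempty W] (E : X → Y → W) (f : X → Y → V) {μX : X → ℝ} (hμX : IsDist μX)
    {k k' ε : ℝ} (hε : 0 ≤ ε)
    (H : ∀ ν : Y → ℝ, IsDist ν → mEntGe ν k →
        SD (pushD (fun xy : X × Y => (E xy.1 xy.2, f xy.1 xy.2)) (prodD μX ν))
           (prodD (uniformD W) (pushD (fun xy : X × Y => f xy.1 xy.2) (prodD μX ν))) ≤ ε)
    {μY : Y → ℝ} (hμY : IsDist μY) (hμYk : mEntGe μY k') :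
    SD (pushD (fun xy : X × Y => (E xy.1 xy.2, f xy.1 xy.2, xy.2)) (prodD μX μY))
       (prodD (uniformD W) (pushD (fun xy : X × Y => (f xy.1 xy.2, xy.2)) (prodD μX μY)))
    ≤ Fintype.card (W × V) * (2 ^ (k - k') + ε) := by
  rw [SD_seed_eq_sum E f μX hμY.1]
  set u : ℝ := (Fintype.card W : ℝ)⁻¹
  set g : W × V → Y → ℝ := fun wv y =>
    pushD (fun x => (E x y, f x y)) μX wv - u * pushD (fun x => f x y) μX wv.2
  have hu : u ≤ 1 := inv_le_one_of_one_le₀ (by exact_mod_cast Fintype.card_pos)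
  have hg_one : ∀ wv y, |g wv y| ≤ 1 := fun wv y =>
    abs_sub_le_of_nonneg_of_le (pushD_nonneg hμX.1 _ _) (pushD_le_one hμX _ _)
      (mul_nonneg (by positivity) (pushD_nonneg hμX.1 _ _))
      (mul_le_one₀ hu (pushD_nonneg hμX.1 _ _) (pushD_le_one hμX _ _))
  have hg_avg : ∀ wv ν, IsDist ν → mEntGe ν k → |∑ y, ν y * g wv y| ≤ 2 * ε := by
    intro wv ν hν hνk
    have hdiff : pushD (fun xy : X × Y => (E xy.1 xy.2, f xy.1 xy.2)) (prodD μX ν) wv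
        - prodD (uniformD W) (pushD (fun xy : X × Y => f xy.1 xy.2) (prodD μX ν)) wv
        = ∑ y, ν y * g wv y := by
      rw [pushD_prodD_apply (fun x y => (E x y, f x y)), prodD, pushD_prodD_apply f, uniformD,
        mul_sum, ← sum_sub_distrib]
      exact sum_congr rfl fun y _ => by ring
    rw [← hdiff]
    exact (abs_sub_le_two_mul_SD _ _ wv).trans
      (mul_le_mul_of_nonneg_left (H ν hν hνk) zero_le_two)
  rw [div_le_iff₀ two_pos]
  calc ∑ wv : W × V, ∑ y, μY y * |g wv y| ≤ ∑ _wv : W × V, (2 * 2 ^ (k - k') + 2 * ε) :=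
        sum_le_sum fun wv _ =>
          sum_mul_abs_le_of_forall_source (by positivity) (hg_one wv) (hg_avg wv) hμY hμYk
    _ = Fintype.card (W × V) * (2 ^ (k - k') + ε) * 2 := by
        rw [sum_const, nsmul_eq_mul, card_univ]; ring

theorem stmt_0_general
    (n1 n2 r m k1 k2 k2' : ℕ) (ε : ℝ) (hε0 : 0 < ε)
    (TExt : BS n1 → BS n2 → BS m) (A : Fin r → BS n2 → BS n2)
    (hTExt : ∀ (μX : BS n1 → ℝ) (μY : BS n2 → ℝ),
      IsDist μX → mEntGe μX (k1:ℝ) → IsDist μY → mEntGe μY (k2:ℝ) →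
      SD (pushD (fun xy : BS n1 × BS n2 =>
            (TExt xy.1 xy.2, fun i : Fin r => TExt xy.1 (A i xy.2))) (prodD μX μY))
         (prodD (uniformD (BS m))
            (pushD (fun xy : BS n1 × BS n2 =>
              fun i : Fin r => TExt xy.1 (A i xy.2)) (prodD μX μY)))
        ≤ ε) :
    ∀ (μX : BS n1 → ℝ) (μY' : BS n2 → ℝ),
      IsDist μX → mEntGe μX (k1:ℝ) → IsDist μY' → mEntGe μY' (k2':ℝ) →
      SD (pushD (fun xy : BS n1 × BS n2 =>
            (TExt xy.1 xy.2, (fun i : Fin r => TExt xy.1 (A i xy.2)), xy.2)) (prodD μX μY'))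
         (prodD (uniformD (BS m))
            (pushD (fun xy : BS n1 × BS n2 =>
              ((fun i : Fin r => TExt xy.1 (A i xy.2)), xy.2)) (prodD μX μY')))
        ≤ (2:ℝ) ^ (((r:ℝ) + 1) * (m:ℝ)) * ((2:ℝ) ^ ((k2:ℝ) - (k2':ℝ) + 1) + ε) := by
  intro μX μY' hμX hμXk hμY' hμY'k
  have hcard : (Fintype.card (BS m × (Fin r → BS m)) : ℝ) = 2 ^ (((r:ℝ) + 1) * m) := by
    rw [show ((r:ℝ) + 1) * m = ((m * (r + 1) : ℕ) : ℝ) by push_cast; ring, Real.rpow_natCast]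
    simp [pow_succ, pow_mul, mul_comm]
  calc _ ≤ Fintype.card (BS m × (Fin r → BS m)) * (2 ^ ((k2:ℝ) - k2') + ε) :=
        SD_seed_le_of_forall_source TExt (fun x y i => TExt x (A i y)) hμX hε0.le
          (fun ν hν hνk => hTExt μX ν hμX hμXk hν hνk) hμY' hμY'k
    _ ≤ _ := by
        rw [hcard]
        gcongr
        · norm_num
        · linarith

theorem stmt_0
    (n1 n2 r m k1 k2 k2' : ℕ) (ε : ℝ) (hε0 : 0 < ε) (hε1 : ε < 1)
    (TExt : BS n1 → BS n2 → BS m) (A : Fin r → BS n2 → BS n2)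
    (hTExt : ∀ (μX : BS n1 → ℝ) (μY : BS n2 → ℝ),
      IsDist μX → mEntGe μX (k1:ℝ) → IsDist μY → mEntGe μY (k2:ℝ) →
      SD (pushD (fun xy : BS n1 × BS n2 =>
            (TExt xy.1 xy.2, fun i : Fin r => TExt xy.1 (A i xy.2))) (prodD μX μY))
         (prodD (uniformD (BS m))
            (pushD (fun xy : BS n1 × BS n2 =>
              fun i : Fin r => TExt xy.1 (A i xy.2)) (prodD μX μY)))
        ≤ ε) :
    ∀ (μX : BS n1 → ℝ) (μY' : BS n2 → ℝ),
      IsDist μX → mEntGe μX (k1:ℝ) → IsDist μY' → mEntGe μY' (k2':ℝ) →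
      SD (pushD (fun xy : BS n1 × BS n2 =>
            (TExt xy.1 xy.2, (fun i : Fin r => TExt xy.1 (A i xy.2)), xy.2)) (prodD μX μY'))
         (prodD (uniformD (BS m))
            (pushD (fun xy : BS n1 × BS n2 =>
              ((fun i : Fin r => TExt xy.1 (A i xy.2)), xy.2)) (prodD μX μY')))
        ≤ (2:ℝ) ^ (((r:ℝ) + 1) * (m:ℝ)) * ((2:ℝ) ^ ((k2:ℝ) - (k2':ℝ) + 1) + ε) :=
  stmt_0_general n1 n2 r m k1 k2 k2' ε hε0 TExt A hTExt

end
end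

section
/- Let p be a prime, l a natural number, and let X and Y be independent random variables taking values in F_p^l with H∞(X) ≥ k1 and H∞(Y) ≥ k2. Let Z = X·Y be the inner product over F_p, and for r ∈ F_p let e_r(s) = e^{2πi·rs/p} (where rs is computed in F_p and lifted to {0,...,p−1}). Then for every nontrivial character e_r (i.e., r ≠ 0), |E_{X,Y}[e_r(Z)]|² ≤ p^l · 2^{−(k1+k2)}. -/
/-!
Write the sum as `∑ x, μX x * g x` with `g x = ∑ y, μY y * e_r (x ⬝ᵥ y)`. Cauchy–Schwarz against
the weights `μX`, together with `μX ≤ 2 ^ (-k1)`, bounds its square by `2 ^ (-k1) * ∑ x, ‖g x‖ ^ 2`.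
Since `r ≠ 0`, the characters `x ↦ e_r (x ⬝ᵥ d)` for `d ≠ 0` sum to zero, so Parseval gives
`∑ x, ‖g x‖ ^ 2 = p ^ l * ∑ y, μY y ^ 2`, and this collision probability is at most `2 ^ (-k2)`.
-/

open Finset
open scoped Classical

noncomputable section

/-- The standard inner product over `ZMod p`. -/
def ipZ {p l : ℕ} (x y : Fin l → ZMod p) : ZMod p := ∑ i, x i * y i

/-- The additive character `e_r(s) = exp(2πi·(r·s)/p)` of `ZMod p`. -/
def chr (p : ℕ) (r s : ZMod p) : ℂ :=
  Complex.exp (2 * Real.pi * Complex.I * ((r * s).val : ℂ) / (p : ℂ))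

open ComplexConjugate

namespace AddChar

lemma IsPrimitive.mulShift {R M : Type*} [CommRing R] [NoZeroDivisors R] [CommMonoid M]
    {ψ : AddChar R M} (hψ : ψ.IsPrimitive) {r : R} (hr : r ≠ 0) :
    (ψ.mulShift r).IsPrimitive := fun a ha => by
  rw [mulShift_mulShift]
  exact hψ (mul_ne_zero hr ha)

variable {R : Type*} [CommRing R] {ι : Type*} [Fintype ι]

lemma map_dotProduct {M : Type*} [CommMonoid M] (ψ : AddChar R M) (x d : ι → R) :
    ψ (x ⬝ᵥ d) = ∏ i, ψ (x i * d i) := by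
  change ψ.toMonoidHom (Multiplicative.ofAdd (∑ i, x i * d i)) = _
  rw [ofAdd_sum, map_prod]
  rfl

variable [Fintype R] [DecidableEq ι]

lemma IsPrimitive.sum_apply_dotProduct [DecidableEq R] {ψ : AddChar R ℂ} (hψ : ψ.IsPrimitive)
    (d : ι → R) :
    ∑ x : ι → R, ψ (x ⬝ᵥ d) = if d = 0 then (Fintype.card R : ℂ) ^ Fintype.card ι else 0 := by
  simp_rw [map_dotProduct]
  rw [← Fintype.prod_sum (fun i s => ψ (s * d i))]
  simp_rw [sum_mulShift _ hψ, Nat.cast_ite, Nat.cast_zero, Finset.prod_ite_zero,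
    Finset.prod_const, Finset.card_univ, Finset.mem_univ, forall_const, funext_iff, Pi.zero_apply]

lemma IsPrimitive.sum_norm_sq_sum_mul_apply_dotProduct {ψ : AddChar R ℂ} (hψ : ψ.IsPrimitive)
    (a : (ι → R) → ℂ) :
    ∑ x, ‖∑ y, a y * ψ (x ⬝ᵥ y)‖ ^ 2 = (Fintype.card R : ℝ) ^ Fintype.card ι * ∑ y, ‖a y‖ ^ 2 := by
  apply Complex.ofReal_injective
  push_cast
  have expand (x y y' : ι → R) : a y * ψ (x ⬝ᵥ y) * conj (a y' * ψ (x ⬝ᵥ y')) =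
      a y * conj (a y') * ψ (x ⬝ᵥ (y - y')) := by
    rw [map_mul, ← map_neg_eq_conj, dotProduct_sub, sub_eq_add_neg, map_add_eq_mul]
    ring
  simp_rw [← Complex.mul_conj', map_sum, Finset.sum_mul_sum, expand]
  rw [Finset.sum_comm]
  refine (Finset.sum_congr rfl fun y _ => Finset.sum_comm).trans ?_
  simp_rw [← Finset.mul_sum, hψ.sum_apply_dotProduct, sub_eq_zero,
    mul_ite, mul_zero, Finset.sum_ite_eq, Finset.mem_univ, if_true]
  rw [← Finset.sum_mul, mul_comm]

end AddChar

namespace IsDist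

variable {α : Type*} [Fintype α] {μ : α → ℝ} {k : ℝ}

lemma sum_sq_le (hμ : IsDist μ) (hk : mEntGe μ k) : ∑ a, μ a ^ 2 ≤ (2 : ℝ) ^ (-k) :=
  calc ∑ a, μ a ^ 2 ≤ ∑ a, (2 : ℝ) ^ (-k) * μ a :=
        Finset.sum_le_sum fun a _ => by rw [sq]; exact mul_le_mul_of_nonneg_right (hk a) (hμ.1 a)
    _ = (2 : ℝ) ^ (-k) := by rw [← Finset.mul_sum, hμ.2, mul_one]

lemma norm_sum_mul_sq_le (hμ : IsDist μ) (hk : mEntGe μ k) (g : α → ℂ) :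
    ‖∑ a, (μ a : ℂ) * g a‖ ^ 2 ≤ (2 : ℝ) ^ (-k) * ∑ a, ‖g a‖ ^ 2 :=
  calc ‖∑ a, (μ a : ℂ) * g a‖ ^ 2 ≤ (∑ a, μ a * ‖g a‖) ^ 2 := by
        gcongr
        refine (norm_sum_le _ _).trans_eq (Finset.sum_congr rfl fun a _ => ?_)
        rw [norm_mul, Complex.norm_of_nonneg (hμ.1 a)]
    _ ≤ (∑ a, μ a) * ∑ a, μ a * ‖g a‖ ^ 2 :=
        Finset.sum_sq_le_sum_mul_sum_of_sq_le_mul _ (fun a _ => hμ.1 a)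
          (fun a _ => mul_nonneg (hμ.1 a) (sq_nonneg _)) fun a _ => le_of_eq (by ring)
    _ ≤ (2 : ℝ) ^ (-k) * ∑ a, ‖g a‖ ^ 2 := by
        rw [hμ.2, one_mul, Finset.mul_sum]
        exact Finset.sum_le_sum fun a _ => mul_le_mul_of_nonneg_right (hk a) (sq_nonneg _)

end IsDist

lemma ipZ_eq_dotProduct {p l : ℕ} (x y : Fin l → ZMod p) : ipZ x y = x ⬝ᵥ y := rfl

lemma chr_eq_mulShift_stdAddChar (p : ℕ) [NeZero p] (r s : ZMod p) :
    chr p r s = (ZMod.stdAddChar.mulShift r) s := by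
  rw [AddChar.mulShift_apply, ZMod.stdAddChar_apply, ZMod.toCircle_apply, chr]

theorem stmt_2
    (p l : ℕ) [NeZero p] (hp : p.Prime) (k1 k2 : ℝ)
    (μX μY : (Fin l → ZMod p) → ℝ)
    (hX : IsDist μX) (hY : IsDist μY)
    (hk1 : mEntGe μX k1) (hk2 : mEntGe μY k2)
    (r : ZMod p) (hr : r ≠ 0) :
    ‖∑ x, ∑ y, ((μX x * μY y : ℝ) : ℂ) * chr p r (ipZ x y)‖ ^ 2
      ≤ (p:ℝ) ^ l * (2:ℝ) ^ (-(k1 + k2)) := by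
  have := Fact.mk hp
  set ψ : AddChar (ZMod p) ℂ := ZMod.stdAddChar.mulShift r with hψ_def
  have hψ : ψ.IsPrimitive := AddChar.IsPrimitive.mulShift (ZMod.isPrimitive_stdAddChar p) hr
  have hsum : ∑ x, ∑ y, ((μX x * μY y : ℝ) : ℂ) * chr p r (ipZ x y)
      = ∑ x, (μX x : ℂ) * ∑ y, (μY y : ℂ) * ψ (x ⬝ᵥ y) := by
    simp_rw [chr_eq_mulShift_stdAddChar, ← hψ_def, ipZ_eq_dotProduct, Finset.mul_sum,
      Complex.ofReal_mul, mul_assoc]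
  calc _ = ‖∑ x, (μX x : ℂ) * ∑ y, (μY y : ℂ) * ψ (x ⬝ᵥ y)‖ ^ 2 := by rw [hsum]
    _ ≤ (2 : ℝ) ^ (-k1) * ∑ x, ‖∑ y, (μY y : ℂ) * ψ (x ⬝ᵥ y)‖ ^ 2 := hX.norm_sum_mul_sq_le hk1 _
    _ = (2 : ℝ) ^ (-k1) * ((p : ℝ) ^ l * ∑ y, μY y ^ 2) := by
        rw [hψ.sum_norm_sq_sum_mul_apply_dotProduct, ZMod.card, Fintype.card_fin]
        simp_rw [Complex.norm_real, Real.norm_eq_abs, sq_abs]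
    _ ≤ (2 : ℝ) ^ (-k1) * ((p : ℝ) ^ l * (2 : ℝ) ^ (-k2)) := by gcongr; exact hY.sum_sq_le hk2
    _ = (p : ℝ) ^ l * (2 : ℝ) ^ (-(k1 + k2)) := by
        rw [neg_add, Real.rpow_add two_pos]
        ring

end
end

section
/- Let p be a prime, l a natural number, and let X and Y be independent random variables taking values in F_p^l. For natural numbers c1, c2, let X_{c1} denote the distribution of (sum of 2^{c1} independent copies of X) minus (sum of another 2^{c1} independent copies of X), with all copies mutually independent, and define Y_{c2} analogously from Y (arithmetic in F_p^l). Then for every nontrivial character ψ of the additive group of F_p (ψ(s) = e^{2πi·rs/p} for some r ≠ 0), |E_{X,Y}[ψ(X·Y)]| ≤ |E_{X_{c1},Y_{c2}}[ψ(X_{c1}·Y_{c2})]|^{1/2^{c1+c2+2}}, where X_{c1} and Y_{c2} are taken independent. -/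
open Finset
open scoped Classical

noncomputable section

/-- The distribution of (sum of `t` independent copies of `μ`) minus
(sum of another `t` independent copies of `μ`), all copies mutually independent. -/
def sumDiffD {α : Type*} [Fintype α] [AddCommGroup α] (t : ℕ) (μ : α → ℝ) : α → ℝ :=
  pushD (fun fg : (Fin t → α) × (Fin t → α) => (∑ j, fg.1 j) - (∑ j, fg.2 j))
    (prodD (fun f => ∏ j, μ (f j)) (fun f => ∏ j, μ (f j)))

/-!
The additive characters of `F_p^l` are `x ↦ ψ(x·y)`, and the Fourier coefficient of `X_c` at the
character indexed by `y` is `|E ψ(X·y)|^{2^{c+1}}`, a nonnegative real. Hence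
`E ψ(X_c·Y) = E_Y |E_X ψ(X·Y)|^{2^{c+1}} ≥ (E_Y |E_X ψ(X·Y)|)^{2^{c+1}} ≥ |E ψ(X·Y)|^{2^{c+1}}`
by the power-mean inequality. Doing this once in `X` and then once in `Y` gives the exponent
`2^{c1+1} · 2^{c2+1} = 2^{c1+c2+2}`.
-/

lemma AddChar.map_sum_eq_prod {A M ι : Type*} [AddCommMonoid A] [CommMonoid M]
    (ψ : AddChar A M) (s : Finset ι) (f : ι → A) : ψ (∑ i ∈ s, f i) = ∏ i ∈ s, ψ (f i) := by
  induction s using Finset.cons_induction with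
  | empty => simp
  | cons a s ha ih => rw [Finset.sum_cons, Finset.prod_cons, AddChar.map_add_eq_mul, ih]

section CharacterSums

variable {α β : Type*} [Fintype α] [Fintype β]

lemma sum_pushD {γ : Type*} [Fintype γ] (f : α → γ) (μ : α → ℝ) :
    ∑ b, pushD f μ b = ∑ a, μ a := by
  simp only [pushD]
  rw [Finset.sum_comm]
  simp

lemma sum_pushD_mul {γ : Type*} [Fintype γ] (f : α → γ) (μ : α → ℝ) (φ : γ → ℂ) :
    ∑ b, (pushD f μ b : ℂ) * φ b = ∑ a, (μ a : ℂ) * φ (f a) := by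
  simp only [pushD, Complex.ofReal_sum, apply_ite Complex.ofReal, Complex.ofReal_zero,
    Finset.sum_mul, ite_mul, zero_mul]
  rw [Finset.sum_comm]
  simp

lemma sum_prodD_pi_mul {t : ℕ} (μ ν : α → ℝ) (φ ψ : α → ℂ) :
    ∑ fg : (Fin t → α) × (Fin t → α),
        (prodD (fun f => ∏ j, μ (f j)) (fun g => ∏ j, ν (g j)) fg : ℂ)
          * ((∏ j, φ (fg.1 j)) * ∏ j, ψ (fg.2 j))
      = (∑ x, (μ x : ℂ) * φ x) ^ t * (∑ x, (ν x : ℂ) * ψ x) ^ t := by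
  simp only [Fintype.sum_pow, Fintype.sum_prod_type, Finset.sum_mul_sum, prodD,
    Complex.ofReal_mul, Complex.ofReal_prod, Finset.prod_mul_distrib]
  refine Finset.sum_congr rfl fun f _ => Finset.sum_congr rfl fun g _ => ?_
  ring

variable [AddCommGroup α]

lemma sumDiffD_isDist (t : ℕ) {μ : α → ℝ} (hμ : IsDist μ) : IsDist (sumDiffD t μ) := by
  refine ⟨fun a => Finset.sum_nonneg fun fg _ => ?_, ?_⟩
  · split_ifs
    · exact mul_nonneg (Finset.prod_nonneg fun j _ => hμ.1 _)
        (Finset.prod_nonneg fun j _ => hμ.1 _)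
    · exact le_rfl
  · rw [sumDiffD, sum_pushD, Fintype.sum_prod_type]
    simp only [prodD, ← Finset.sum_mul_sum, ← Fintype.sum_pow, hμ.2, one_pow, one_mul]

lemma sum_sumDiffD_mul_addChar (t : ℕ) (μ : α → ℝ) (ψ : AddChar α ℂ) :
    ∑ x, (sumDiffD t μ x : ℂ) * ψ x = ((‖∑ x, (μ x : ℂ) * ψ x‖ ^ (2 * t) : ℝ) : ℂ) := by
  have hψ : ∀ f g : Fin t → α, ψ (∑ j, f j - ∑ j, g j)
      = (∏ j, ψ (f j)) * ∏ j, starRingEnd ℂ (ψ (g j)) := by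
    intro f g
    simp only [sub_eq_add_neg, AddChar.map_add_eq_mul, ← Finset.sum_neg_distrib,
      AddChar.map_sum_eq_prod, AddChar.map_neg_eq_conj]
  rw [sumDiffD, sum_pushD_mul]
  simp only [hψ]
  refine (sum_prodD_pi_mul μ μ ψ (fun a => starRingEnd ℂ (ψ a))).trans ?_
  have hconj : ∑ x, (μ x : ℂ) * starRingEnd ℂ (ψ x) = starRingEnd ℂ (∑ x, (μ x : ℂ) * ψ x) := by
    simp only [map_sum, map_mul, Complex.conj_ofReal]
  rw [hconj, ← mul_pow, Complex.mul_conj, Complex.normSq_eq_norm_sq]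
  push_cast
  ring

lemma norm_sum_sum_pow_le_sumDiffD (t : ℕ) (μ : α → ℝ) {ν : β → ℝ} (hν : IsDist ν)
    (χ : β → AddChar α ℂ) :
    ‖∑ x, ∑ y, ((μ x * ν y : ℝ) : ℂ) * χ y x‖ ^ (2 * t)
      ≤ ‖∑ x, ∑ y, ((sumDiffD t μ x * ν y : ℝ) : ℂ) * χ y x‖ := by
  have hswap : ∀ μ' : α → ℝ, ∑ x, ∑ y, ((μ' x * ν y : ℝ) : ℂ) * χ y x
      = ∑ y, (ν y : ℂ) * ∑ x, (μ' x : ℂ) * χ y x := fun μ' => by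
    rw [Finset.sum_comm]
    simp only [Finset.mul_sum, Complex.ofReal_mul]
    exact Finset.sum_congr rfl fun y _ => Finset.sum_congr rfl fun x _ => by ring
  set a : β → ℝ := fun y => ‖∑ x, (μ x : ℂ) * χ y x‖
  have hle : ‖∑ x, ∑ y, ((μ x * ν y : ℝ) : ℂ) * χ y x‖ ≤ ∑ y, ν y * a y := by
    rw [hswap]
    refine (norm_sum_le _ _).trans (Finset.sum_le_sum fun y _ => ?_)
    rw [norm_mul, Complex.norm_real, Real.norm_of_nonneg (hν.1 y)]
  have heq : ∑ x, ∑ y, ((sumDiffD t μ x * ν y : ℝ) : ℂ) * χ y x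
      = ((∑ y, ν y * a y ^ (2 * t) : ℝ) : ℂ) := by
    rw [hswap]
    simp only [sum_sumDiffD_mul_addChar, Complex.ofReal_sum, Complex.ofReal_mul, a]
  calc ‖∑ x, ∑ y, ((μ x * ν y : ℝ) : ℂ) * χ y x‖ ^ (2 * t)
      ≤ (∑ y, ν y * a y) ^ (2 * t) := pow_le_pow_left₀ (norm_nonneg _) hle _
    _ ≤ ∑ y, ν y * a y ^ (2 * t) := Real.pow_arith_mean_le_arith_mean_pow _ _ _
        (fun y _ => hν.1 y) hν.2 (fun y _ => norm_nonneg _) _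
    _ = _ := by
        rw [heq, Complex.norm_real, Real.norm_of_nonneg
          (Finset.sum_nonneg fun y _ => mul_nonneg (hν.1 y) (by positivity))]

end CharacterSums

section InnerProductCharacter

variable {p l : ℕ} [NeZero p]

lemma chr_eq_stdAddChar (r s : ZMod p) : chr p r s = ZMod.stdAddChar (r * s) := by
  rw [ZMod.stdAddChar_apply, ZMod.toCircle_apply, chr]

def ipChar (r : ZMod p) (y : Fin l → ZMod p) : AddChar (Fin l → ZMod p) ℂ where
  toFun x := chr p r (ipZ x y)
  map_zero_eq_one' := by simp [chr_eq_stdAddChar, ipZ]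
  map_add_eq_mul' a b := by
    simp only [chr_eq_stdAddChar, ipZ, Pi.add_apply, add_mul, Finset.sum_add_distrib, mul_add,
      AddChar.map_add_eq_mul]

lemma sum_sum_chr_ipZ_comm (r : ZMod p) (μ ν : (Fin l → ZMod p) → ℝ) :
    ∑ x, ∑ y, ((μ x * ν y : ℝ) : ℂ) * chr p r (ipZ x y)
      = ∑ y, ∑ x, ((ν y * μ x : ℝ) : ℂ) * chr p r (ipZ y x) := by
  rw [Finset.sum_comm]
  simp only [ipZ, mul_comm]

end InnerProductCharacter

theorem stmt_3_general
    (p l : ℕ) [NeZero p] (c1 c2 : ℕ)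
    (μX μY : (Fin l → ZMod p) → ℝ)
    (hX : IsDist μX) (hY : IsDist μY)
    (r : ZMod p) :
    ‖∑ x, ∑ y, ((μX x * μY y : ℝ) : ℂ) * chr p r (ipZ x y)‖
      ≤ (‖∑ x, ∑ y,
            ((sumDiffD (2 ^ c1) μX x * sumDiffD (2 ^ c2) μY y : ℝ) : ℂ) * chr p r (ipZ x y)‖)
          ^ ((1:ℝ) / 2 ^ (c1 + c2 + 2)) := by
  have stepX := norm_sum_sum_pow_le_sumDiffD (2 ^ c1) μX hY (ipChar r)
  have stepY := norm_sum_sum_pow_le_sumDiffD (2 ^ c2) μY (sumDiffD_isDist (2 ^ c1) hX) (ipChar r)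
  simp only [ipChar, AddChar.coe_mk, ← sum_sum_chr_ipZ_comm] at stepX stepY
  have hN : (2 : ℝ) ^ (c1 + c2 + 2) = ((2 * 2 ^ c1 * (2 * 2 ^ c2) : ℕ) : ℝ) := by push_cast; ring
  rw [one_div, hN, Real.le_rpow_inv_iff_of_pos (norm_nonneg _)
    (norm_nonneg _) (by positivity), Real.rpow_natCast, pow_mul]
  exact (pow_le_pow_left₀ (by positivity) stepX _).trans stepY

theorem stmt_3
    (p l : ℕ) [NeZero p] (hp : p.Prime) (c1 c2 : ℕ)
    (μX μY : (Fin l → ZMod p) → ℝ)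
    (hX : IsDist μX) (hY : IsDist μY)
    (r : ZMod p) (hr : r ≠ 0) :
    ‖∑ x, ∑ y, ((μX x * μY y : ℝ) : ℂ) * chr p r (ipZ x y)‖
      ≤ (‖∑ x, ∑ y,
            ((sumDiffD (2 ^ c1) μX x * sumDiffD (2 ^ c2) μY y : ℝ) : ℂ) * chr p r (ipZ x y)‖)
          ^ ((1:ℝ) / 2 ^ (c1 + c2 + 2)) :=
  stmt_3_general p l c1 c2 μX μY hX hY r
end
end

section
/- Let n1, k, s, ℓ be natural numbers, ε ∈ (0,1), and set n2 = 2(s+1). Fix an injective map ι : {0,1}^s → GF(2^{s+1}) \ {0} and a fixed F_2-linear identification of GF(2^{s+1}) with F_2^{s+1}, and define Enc : {0,1}^s → F_2^{n2} by Enc(y) = (ι(y), ι(y)³). Suppose f : {0,1}^{n1} → F_2^{n2} is such that for every (n1,k)-source X and every independent distribution W on F_2^{n2} with min-entropy at least n2/2 − ℓ, the bit ⟨f(X), W⟩ (inner product over F_2) is ε-close to uniform. Then the function nmExt : {0,1}^{n1} × {0,1}^s → {0,1} defined by nmExt(x,y) = ⟨f(x), Enc(y)⟩ is a (k, ε')-non-malleable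 extractor with ε' ≤ 64·2^{−ℓ} + 8ε. -/
open Finset
open scoped Classical

noncomputable section

/-- The inner product over `F_2` of two vectors in `F_2^s × F_2^s ≅ F_2^{2s}`. -/
def ipPair {s : ℕ} (v w : (Fin s → ZMod 2) × (Fin s → ZMod 2)) : ZMod 2 :=
  (∑ i, v.1 i * w.1 i) + (∑ i, v.2 i * w.2 i)


/-!
For one output bit, the distance of `(E(X,y), E(X,A y), y)` from `(U, E(X,A y), y)` is bounded,
by Fourier expansion on `ZMod 2 × ZMod 2`, by the average over `y` of the biases of `E(X,y)` and
of `E(X,y) + E(X,A y) = ⟨f X, Enc y + Enc (A y)⟩`. Both are biases of `⟨f X, g y⟩` for maps `g`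
whose fibres have at most two points: `Enc` is injective, and in characteristic two the pair
`(ι y + ι (A y), ι y ^ 3 + ι (A y) ^ 3)` determines `ι y` up to adding `ι y + ι (A y) ≠ 0`.
For such `g`, let `T` be the set of `y` with positive (or negative) bias. If `T` is large, `g` of
a uniform point of `T` has min-entropy at least `s + 1 - ℓ`, so the hypothesis on `f` bounds the
total bias over `T` by `2ε|T|`; if `T` is small, it contributes at most `|T|`.
-/

def pmSign (z : ZMod 2) : ℝ := if z = 0 then 1 else -1

def bias {α : Type*} [Fintype α] (μ : α → ℝ) (g : α → ZMod 2) : ℝ :=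
  ∑ a, μ a * pmSign (g a)

def uniformOn {α : Type*} (T : Finset α) : α → ℝ :=
  fun a => if a ∈ T then (#T : ℝ)⁻¹ else 0

def IsTwoSourceBitExt {X W : Type*} [Fintype X] [Fintype W] (h : X → W → ZMod 2)
    (k m ε : ℝ) : Prop :=
  ∀ μX μW, IsDist μX → mEntGe μX k → IsDist μW → mEntGe μW m →
    SD (pushD (fun xw : X × W => h xw.1 xw.2) (prodD μX μW)) (uniformD (ZMod 2)) ≤ ε

lemma ZMod.two_cases (a : ZMod 2) : a = 0 ∨ a = 1 := by
  revert a; decide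

@[simp] lemma pmSign_zero : pmSign 0 = 1 := if_pos rfl

@[simp] lemma pmSign_one : pmSign 1 = -1 := if_neg (by decide)

@[simp] lemma abs_pmSign (a : ZMod 2) : |pmSign a| = 1 := by
  rcases ZMod.two_cases a with rfl | rfl <;> simp

lemma sum_zmod_two (F : ZMod 2 → ℝ) : ∑ a, F a = F 0 + F 1 :=
  Fin.sum_univ_two F

lemma prodD_apply {α β : Type*} (p : α → ℝ) (q : β → ℝ) (z : α × β) :
    prodD p q z = p z.1 * q z.2 := rfl

section Distributions

variable {α β : Type*} [Fintype α]

lemma sum_pushD_mul_s9 [Fintype β] (g : α → β) (p : α → ℝ) (F : β → ℝ) :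
    ∑ b, pushD g p b * F b = ∑ a, p a * F (g a) := by
  simp only [pushD, Finset.sum_mul, ite_mul, zero_mul]
  rw [Finset.sum_comm]
  simp

lemma IsDist.pushD [Fintype β] {p : α → ℝ} (hp : IsDist p) (g : α → β) : IsDist (pushD g p) :=
  ⟨fun b => Finset.sum_nonneg fun a _ => by split_ifs <;> simp [hp.1 a],
    by simpa [hp.2] using sum_pushD_mul_s9 g p 1⟩

lemma IsDist.prodD [Fintype β] {p : α → ℝ} {q : β → ℝ} (hp : IsDist p) (hq : IsDist q) :
    IsDist (prodD p q) :=
  ⟨fun z => mul_nonneg (hp.1 _) (hq.1 _), by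
    simp [_root_.prodD, Fintype.sum_prod_type, ← Finset.mul_sum, hp.2, hq.2]⟩

lemma isDist_uniformOn {T : Finset α} (hT : T.Nonempty) : IsDist (uniformOn T) := by
  refine ⟨fun a => by unfold uniformOn; positivity, ?_⟩
  simp [uniformOn, Finset.sum_ite_mem, hT.card_pos.ne']

lemma pushD_uniformOn_le [DecidableEq β] {c : ℕ} (g : α → β) (hg : ∀ b, #{a | g a = b} ≤ c)
    (T : Finset α) (b : β) : pushD g (uniformOn T) b ≤ c / #T := by
  calc pushD g (uniformOn T) b ≤ ∑ a, if g a = b then (#T : ℝ)⁻¹ else 0 := by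
        refine Finset.sum_le_sum fun a _ => ?_
        unfold uniformOn
        split_ifs <;> simp
    _ = #{a | g a = b} / #T := by simp [Finset.sum_ite, div_eq_mul_inv]
    _ ≤ c / #T := by gcongr; exact_mod_cast hg b

end Distributions

section Bias

variable {α : Type*} [Fintype α]

lemma abs_bias_le_one {μ : α → ℝ} (hμ : IsDist μ) (g : α → ZMod 2) : |bias μ g| ≤ 1 := by
  calc |bias μ g| ≤ ∑ a, |μ a * pmSign (g a)| := Finset.abs_sum_le_sum_abs _ _
    _ = 1 := by simp [abs_of_nonneg (hμ.1 _), hμ.2]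

lemma SD_pushD_uniformD_zmod_two {μ : α → ℝ} (hμ : ∑ a, μ a = 1) (g : α → ZMod 2) :
    SD (pushD g μ) (uniformD (ZMod 2)) = |bias μ g| / 2 := by
  have hsum : pushD g μ 0 + pushD g μ 1 = 1 := by
    simpa [sum_zmod_two, hμ] using sum_pushD_mul_s9 g μ 1
  have hdiff : pushD g μ 0 - pushD g μ 1 = bias μ g := by
    simpa [sum_zmod_two, bias, sub_eq_add_neg] using sum_pushD_mul_s9 g μ pmSign
  have hunif : uniformD (ZMod 2) = fun _ => 1 / 2 := by
    ext; simp [uniformD]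
  rw [SD, sum_zmod_two, hunif, ← hdiff,
    show pushD g μ 0 - 1 / 2 = (pushD g μ 0 - pushD g μ 1) / 2 by linarith,
    show pushD g μ 1 - 1 / 2 = -((pushD g μ 0 - pushD g μ 1) / 2) by linarith,
    abs_neg, abs_div]
  norm_num

lemma bias_prodD {W : Type*} [Fintype W] (h : α → W → ZMod 2) (μX : α → ℝ) (μW : W → ℝ) :
    bias (prodD μX μW) (fun xw => h xw.1 xw.2) = ∑ w, μW w * bias μX (fun x => h x w) := by
  simp only [bias, prodD, Fintype.sum_prod_type, Finset.mul_sum]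
  rw [Finset.sum_comm]
  exact Finset.sum_congr rfl fun _ _ => Finset.sum_congr rfl fun _ _ => by ring

end Bias

lemma abs_sum_bias_le_of_isTwoSourceBitExt {X Y W : Type*} [Fintype X] [Fintype Y] [Fintype W]
    [DecidableEq W]
    {h : X → W → ZMod 2} {k m ε : ℝ} (hh : IsTwoSourceBitExt h k m ε)
    {μX : X → ℝ} (hμX : IsDist μX) (hk : mEntGe μX k)
    {g : Y → W} {c : ℕ} (hg : ∀ w, #{y | g y = w} ≤ c)
    {T : Finset Y} (hT : c * (2 : ℝ) ^ m ≤ #T) :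
    |∑ y ∈ T, bias μX (fun x => h x (g y))| ≤ 2 * ε * #T := by
  obtain rfl | hTne := T.eq_empty_or_nonempty
  · simp
  have hTpos : (0 : ℝ) < #T := by exact_mod_cast hTne.card_pos
  set μW := pushD g (uniformOn T)
  have hW : IsDist μW := (isDist_uniformOn hTne).pushD g
  have hWm : mEntGe μW m := fun w => (pushD_uniformOn_le g hg T w).trans <| by
    rw [div_le_iff₀ hTpos, Real.rpow_neg zero_le_two, ← div_eq_inv_mul,
      le_div_iff₀ (by positivity)]
    exact hT
  have hsd := hh μX μW hμX hk hW hWm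
  have hmix : ∑ w, μW w * bias μX (fun x => h x w)
      = (#T : ℝ)⁻¹ * ∑ y ∈ T, bias μX (fun x => h x (g y)) := by
    simp [μW, sum_pushD_mul_s9, uniformOn, Finset.sum_ite_mem, Finset.mul_sum]
  rw [SD_pushD_uniformD_zmod_two (hμX.prodD hW).2, bias_prodD, hmix, abs_mul,
    abs_inv, Nat.abs_cast] at hsd
  rw [inv_mul_eq_div, div_div, div_le_iff₀ (by positivity)] at hsd
  linarith

section SubsetSums

variable {Y : Type*} [Fintype Y] {C : Y → ℝ} {θ δ : ℝ}

lemma sum_abs_le_of_nonneg_of_abs_sum_le (hδ : 0 ≤ δ) (hθ : 0 ≤ θ) (hC : ∀ y, |C y| ≤ 1)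
    (hT : ∀ T : Finset Y, θ ≤ #T → |∑ y ∈ T, C y| ≤ δ * #T)
    {S : Finset Y} (hS : ∀ y ∈ S, 0 ≤ C y) :
    ∑ y ∈ S, |C y| ≤ δ * Fintype.card Y + θ := by
  by_cases hθS : θ ≤ #S
  · have hcard : (#S : ℝ) ≤ Fintype.card Y := by exact_mod_cast S.card_le_univ
    calc ∑ y ∈ S, |C y| = |∑ y ∈ S, C y| := by
          rw [abs_of_nonneg (Finset.sum_nonneg hS)]
          exact Finset.sum_congr rfl fun y hy => abs_of_nonneg (hS y hy)
      _ ≤ δ * #S := hT S hθS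
      _ ≤ δ * Fintype.card Y + θ := by linarith [mul_le_mul_of_nonneg_left hcard hδ]
  · calc ∑ y ∈ S, |C y| ≤ ∑ _y ∈ S, (1 : ℝ) := Finset.sum_le_sum fun y _ => hC y
      _ ≤ θ := by simpa using (not_le.1 hθS).le
      _ ≤ δ * Fintype.card Y + θ := by
          linarith [mul_nonneg hδ (Fintype.card Y).cast_nonneg (α := ℝ)]

lemma sum_abs_le_of_abs_sum_le (hδ : 0 ≤ δ) (hθ : 0 ≤ θ) (hC : ∀ y, |C y| ≤ 1)
    (hT : ∀ T : Finset Y, θ ≤ #T → |∑ y ∈ T, C y| ≤ δ * #T) :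
    ∑ y, |C y| ≤ 2 * (δ * Fintype.card Y + θ) := by
  rw [← Finset.sum_filter_add_sum_filter_not univ (fun y => 0 ≤ C y)]
  have hpos := sum_abs_le_of_nonneg_of_abs_sum_le hδ hθ hC hT
    (S := {y | 0 ≤ C y}) fun y hy => (Finset.mem_filter.1 hy).2
  have hneg := sum_abs_le_of_nonneg_of_abs_sum_le (C := fun y => -C y) hδ hθ
    (fun y => (abs_neg (C y)).trans_le (hC y))
    (fun T hθT => by simpa [Finset.sum_neg_distrib] using hT T hθT)
    (S := {y | ¬ 0 ≤ C y}) fun y hy => by simpa using (not_le.1 (Finset.mem_filter.1 hy).2).le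
  simp only [abs_neg] at hneg
  linarith

end SubsetSums

lemma sum_abs_bias_le_of_isTwoSourceBitExt {X Y W : Type*} [Fintype X] [Fintype Y] [Fintype W]
    [DecidableEq W]
    {h : X → W → ZMod 2} {k m ε : ℝ} (hh : IsTwoSourceBitExt h k m ε) (hε : 0 ≤ ε)
    {μX : X → ℝ} (hμX : IsDist μX) (hk : mEntGe μX k)
    {g : Y → W} {c : ℕ} (hg : ∀ w, #{y | g y = w} ≤ c) :
    ∑ y, |bias μX (fun x => h x (g y))|
      ≤ 2 * (2 * ε * Fintype.card Y + c * (2 : ℝ) ^ m) :=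
  sum_abs_le_of_abs_sum_le (by positivity) (by positivity)
    (fun y => abs_bias_le_one hμX _)
    (fun _ hT => abs_sum_bias_le_of_isTwoSourceBitExt hh hμX hk hg hT)

lemma pushD_prodD_apply_of_proj {X Y β : Type*} [Fintype X] [Fintype Y] (F : X × Y → β)
    (π : β → Y) (hπ : ∀ z, π (F z) = z.2) (μ : X → ℝ) (ν : Y → ℝ) (b : β) :
    pushD F (prodD μ ν) b = ν (π b) * ∑ x, if F (x, π b) = b then μ x else 0 := by
  simp only [pushD, prodD, Fintype.sum_prod_type, Finset.mul_sum]
  refine Finset.sum_congr rfl fun x _ => ?_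
  rw [Finset.sum_eq_single (π b)]
  · split_ifs <;> ring
  · rintro y - hy
    rw [if_neg]
    rintro rfl
    exact hy (hπ (x, y)).symm
  · simp

lemma ite_and_sub_ite_div_two (a b m c : ZMod 2) (r : ℝ) :
    (if a = m ∧ b = c then r else 0) - (if b = c then r else 0) / 2
      = r / 4 * (pmSign m * pmSign a + pmSign (m + c) * pmSign (a + b)) := by
  rcases ZMod.two_cases a with rfl | rfl <;> rcases ZMod.two_cases b with rfl | rfl <;>
    rcases ZMod.two_cases m with rfl | rfl <;> rcases ZMod.two_cases c with rfl | rfl <;>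
    simp only [show (1 + 1 : ZMod 2) = 0 from rfl, add_zero, zero_add, pmSign_zero, pmSign_one] <;>
    norm_num <;> ring

lemma SD_nonMalleable_le_sum_abs_bias {X Y : Type*} [Fintype X] [Fintype Y]
    (E : X → Y → ZMod 2) (A : Y → Y) (μX : X → ℝ) :
    SD (pushD (fun xy : X × Y => (E xy.1 xy.2, E xy.1 (A xy.2), xy.2)) (prodD μX (uniformD Y)))
       (prodD (uniformD (ZMod 2))
         (pushD (fun xy : X × Y => (E xy.1 (A xy.2), xy.2)) (prodD μX (uniformD Y))))
    ≤ (Fintype.card Y : ℝ)⁻¹ / 2 *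
        ∑ y, (|bias μX (fun x => E x y)| + |bias μX (fun x => E x y + E x (A y))|) := by
  set u : ℝ := (Fintype.card Y : ℝ)⁻¹
  set P := pushD (fun xy : X × Y => (E xy.1 xy.2, E xy.1 (A xy.2), xy.2)) (prodD μX (uniformD Y))
  set Q := prodD (uniformD (ZMod 2))
    (pushD (fun xy : X × Y => (E xy.1 (A xy.2), xy.2)) (prodD μX (uniformD Y)))
  have hdiff : ∀ m c y, P (m, c, y) - Q (m, c, y) = u / 4 * (pmSign m * bias μX (fun x => E x y)
          + pmSign (m + c) * bias μX (fun x => E x y + E x (A y))) := by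
    intro m c y
    simp only [P, Q, prodD_apply]
    rw [pushD_prodD_apply_of_proj _ (·.2.2) (fun _ => rfl),
      pushD_prodD_apply_of_proj _ (·.2) (fun _ => rfl)]
    simp only [uniformD, bias, Prod.mk.injEq, and_true, Finset.mul_sum, ← Finset.sum_add_distrib,
      ← Finset.sum_sub_distrib]
    refine Finset.sum_congr rfl fun x _ => ?_
    have := ite_and_sub_ite_div_two (E x y) (E x (A y)) m c (μX x)
    rw [ZMod.card]
    linear_combination u * this
  have hpt : ∀ z : ZMod 2 × ZMod 2 × Y, |P z - Q z| ≤ u / 4 * (|bias μX (fun x => E x z.2.2)|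
      + |bias μX (fun x => E x z.2.2 + E x (A z.2.2))|) := by
    rintro ⟨m, c, y⟩
    rw [hdiff, abs_mul, abs_of_nonneg (by positivity)]
    gcongr
    refine (abs_add_le _ _).trans ?_
    simp [abs_mul]
  rw [SD]
  calc _ ≤ (∑ z : ZMod 2 × ZMod 2 × Y, u / 4 * (|bias μX (fun x => E x z.2.2)|
        + |bias μX (fun x => E x z.2.2 + E x (A z.2.2))|)) / 2 := by
        gcongr with z; exact hpt z
    _ = _ := by
        simp only [Fintype.sum_prod_type, sum_zmod_two, ← Finset.mul_sum]
        ring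

lemma ipPair_add_right {t : ℕ} (v w w' : (Fin t → ZMod 2) × (Fin t → ZMod 2)) :
    ipPair v (w + w') = ipPair v w + ipPair v w' := by
  simp only [ipPair, Prod.fst_add, Prod.snd_add, Pi.add_apply, mul_add, Finset.sum_add_distrib]
  ring

section Fibers

variable {α β γ : Type*} [Fintype α]

lemma card_filter_eq_le_one_of_injective [DecidableEq β] {g : α → β}
    (hg : Function.Injective g) (b : β) : #{a | g a = b} ≤ 1 :=
  Finset.card_le_one.2 fun _ ha _ ha' =>
    hg ((Finset.mem_filter.1 ha).2.trans (Finset.mem_filter.1 ha').2.symm)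

lemma card_filter_comp_eq_le [DecidableEq β] [DecidableEq γ] {φ : β → γ}
    (hφ : Function.Injective φ) {D : α → β} {c : ℕ} (hD : ∀ b, #{a | D a = b} ≤ c) (w : γ) :
    #{a | φ (D a) = w} ≤ c := by
  by_cases hw : ∃ b, φ b = w
  · obtain ⟨b, rfl⟩ := hw
    simpa [hφ.eq_iff] using hD b
  · simp only [not_exists] at hw
    simp [hw]

end Fibers

lemma two_eq_zero_of_card_eq_two_pow {K : Type*} [Field K] [Fintype K] {n : ℕ}
    (hK : Fintype.card K = 2 ^ (n + 1)) : (2 : K) = 0 := by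
  have h := FiniteField.cast_card_eq_zero K
  rw [hK, Nat.cast_pow, Nat.cast_ofNat] at h
  exact pow_eq_zero_iff n.succ_ne_zero |>.1 h

section CharTwo

variable {K : Type*} [Field K]

lemma eq_add_of_add_eq_of_two_eq_zero (h2 : (2 : K) = 0) {u w a : K} (h : u + w = a) :
    w = u + a := by
  linear_combination h - u * h2

/-- In characteristic two `x ^ 3 + (x + a) ^ 3 = a x ^ 2 + a ^ 2 x + a ^ 3`, a quadratic in `x`
whose roots differ by `a`. -/
lemma eq_or_eq_add_of_cube_add_cube_eq (h2 : (2 : K) = 0) {a x x₀ : K} (ha : a ≠ 0)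
    (h : x ^ 3 + (x + a) ^ 3 = x₀ ^ 3 + (x₀ + a) ^ 3) : x = x₀ ∨ x = x₀ + a := by
  have hfac : (x - x₀) * (a * (x + x₀ + a)) = 0 := by
    linear_combination h - (x ^ 3 - x₀ ^ 3 + a * (x ^ 2 - x₀ ^ 2) + a ^ 2 * (x - x₀)) * h2
  rcases mul_eq_zero.1 hfac with h | h
  · exact Or.inl (sub_eq_zero.1 h)
  · exact Or.inr (by linear_combination (mul_eq_zero.1 h).resolve_left ha - (x₀ + a) * h2)

lemma card_filter_add_cube_eq_le_two (h2 : (2 : K) = 0) {Y : Type*} [Fintype Y]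
    {ι : Y → K} (hι : Function.Injective ι) {A : Y → Y} (hA : ∀ y, A y ≠ y) (v : K × K) :
    #{y | (ι y + ι (A y), ι y ^ 3 + ι (A y) ^ 3) = v} ≤ 2 := by
  set S : Finset Y := {y | (ι y + ι (A y), ι y ^ 3 + ι (A y) ^ 3) = v}
  obtain hS | ⟨y₀, hy₀⟩ := S.eq_empty_or_nonempty
  · simp [hS]
  have hmem : ∀ y ∈ S, ι (A y) = ι y + v.1 ∧ ι y ^ 3 + (ι y + v.1) ^ 3 = v.2 := by
    intro y hy
    have hv := (Finset.mem_filter.1 hy).2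
    have hAy := eq_add_of_add_eq_of_two_eq_zero h2 (congrArg Prod.fst hv)
    refine ⟨hAy, ?_⟩
    rw [← hAy]
    exact congrArg Prod.snd hv
  have ha : v.1 ≠ 0 := fun ha => hA y₀ (hι (by simpa [ha] using (hmem y₀ hy₀).1))
  calc #S ≤ #({ι y₀, ι y₀ + v.1} : Finset K) := by
        refine Finset.card_le_card_of_injOn ι (fun y hy => ?_) hι.injOn
        simpa using eq_or_eq_add_of_cube_add_cube_eq h2 ha
          ((hmem y hy).2.trans (hmem y₀ hy₀).2.symm)
    _ ≤ 2 := Finset.card_le_two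

lemma card_filter_enc_add_enc_eq_le_two (h2 : (2 : K) = 0) {V Y : Type*} [AddCommGroup V]
    [DecidableEq V] [Fintype Y] (e : K ≃+ V) {ι : Y → K} (hι : Function.Injective ι)
    {A : Y → Y} (hA : ∀ y, A y ≠ y) (w : V × V) :
    #{y | (e (ι y), e (ι y ^ 3)) + (e (ι (A y)), e (ι (A y) ^ 3)) = w} ≤ 2 := by
  have hsum : ∀ y, (e (ι y), e (ι y ^ 3)) + (e (ι (A y)), e (ι (A y) ^ 3))
      = Prod.map e e (ι y + ι (A y), ι y ^ 3 + ι (A y) ^ 3) := by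
    simp [map_add]
  simp only [hsum]
  exact card_filter_comp_eq_le (Prod.map_injective.2 ⟨e.injective, e.injective⟩)
    (D := fun y => (ι y + ι (A y), ι y ^ 3 + ι (A y) ^ 3))
    (card_filter_add_cube_eq_le_two h2 hι hA) w

end CharTwo

theorem stmt_9_general
    (n1 k s ℓ : ℕ) (ε : ℝ) (hε0 : 0 < ε)
    (K : Type) [Field K] [Fintype K] (hK : Fintype.card K = 2 ^ (s + 1))
    (ι : BS s → K) (hι : Function.Injective ι)
    (e : K ≃+ (Fin (s + 1) → ZMod 2))
    (f : BS n1 → (Fin (s + 1) → ZMod 2) × (Fin (s + 1) → ZMod 2))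
    (hf : ∀ (μX : BS n1 → ℝ)
        (μW : ((Fin (s + 1) → ZMod 2) × (Fin (s + 1) → ZMod 2)) → ℝ),
      IsDist μX → mEntGe μX (k:ℝ) → IsDist μW →
      mEntGe μW ((2 * ((s:ℝ) + 1)) / 2 - (ℓ:ℝ)) →
      SD (pushD (fun xw : BS n1 × ((Fin (s + 1) → ZMod 2) × (Fin (s + 1) → ZMod 2)) =>
            ipPair (f xw.1) xw.2) (prodD μX μW))
         (uniformD (ZMod 2)) ≤ ε) :
    IsNME (fun x y => ipPair (f x) (e (ι y), e (ι y ^ 3))) (k:ℝ)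
      (64 * (2:ℝ) ^ (-(ℓ:ℝ)) + 8 * ε) := by
  intro μX hμX hk A hA
  have hext : IsTwoSourceBitExt (fun x w => ipPair (f x) w) k _ ε := hf
  have henc : Function.Injective fun y => (e (ι y), e (ι y ^ 3)) :=
    fun y y' h => hι (e.injective (congrArg Prod.fst h))
  have hS₁ := sum_abs_bias_le_of_isTwoSourceBitExt hext hε0.le hμX hk
    (fun w => (card_filter_eq_le_one_of_injective henc w).trans one_le_two)
  have hS₂ := sum_abs_bias_le_of_isTwoSourceBitExt hext hε0.le hμX hk
    (card_filter_enc_add_enc_eq_le_two (two_eq_zero_of_card_eq_two_pow hK) e hι hA)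
  simp only [ipPair_add_right] at hS₂
  have hN : (Fintype.card (BS s) : ℝ) = 2 ^ s := by simp
  have hpow : (2 : ℝ) ^ ((2 * ((s:ℝ) + 1)) / 2 - (ℓ:ℝ)) = 2 * 2 ^ s * 2 ^ (-(ℓ:ℝ)) := by
    rw [show (2 * ((s:ℝ) + 1)) / 2 - ℓ = ((s + 1 : ℕ) : ℝ) + -ℓ by push_cast; ring,
      Real.rpow_add two_pos, Real.rpow_natCast, pow_succ]
    ring
  refine (SD_nonMalleable_le_sum_abs_bias (fun x y => ipPair (f x) (e (ι y), e (ι y ^ 3)))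
    A μX).trans ?_
  rw [Finset.sum_add_distrib, hN]
  rw [hN, hpow, Nat.cast_ofNat] at hS₁ hS₂
  calc _ ≤ ((2:ℝ) ^ s)⁻¹ / 2 * (2 * (2 * (2 * ε * 2 ^ s + 2 * (2 * 2 ^ s * 2 ^ (-(ℓ:ℝ)))))) :=
        mul_le_mul_of_nonneg_left (by linarith) (by positivity)
    _ = 4 * ε + 8 * 2 ^ (-(ℓ:ℝ)) := by field_simp; ring
    _ ≤ _ := by linarith [Real.rpow_pos_of_pos two_pos (-(ℓ:ℝ))]

/-- Here `K` plays the role of `GF(2^{s+1})` (any field of that cardinality),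
`e` is the fixed `F_2`-linear identification of `K` with `F_2^{s+1}`, and
`F_2^{n2}` (with `n2 = 2(s+1)`) is represented as `F_2^{s+1} × F_2^{s+1}`. -/
theorem stmt_9
    (n1 k s ℓ : ℕ) (ε : ℝ) (hε0 : 0 < ε) (hε1 : ε < 1)
    (K : Type) [Field K] [Fintype K] (hK : Fintype.card K = 2 ^ (s + 1))
    (ι : BS s → K) (hι : Function.Injective ι) (hι0 : ∀ y, ι y ≠ 0)
    (e : K ≃+ (Fin (s + 1) → ZMod 2))
    (f : BS n1 → (Fin (s + 1) → ZMod 2) × (Fin (s + 1) → ZMod 2))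
    (hf : ∀ (μX : BS n1 → ℝ)
        (μW : ((Fin (s + 1) → ZMod 2) × (Fin (s + 1) → ZMod 2)) → ℝ),
      IsDist μX → mEntGe μX (k:ℝ) → IsDist μW →
      mEntGe μW ((2 * ((s:ℝ) + 1)) / 2 - (ℓ:ℝ)) →
      SD (pushD (fun xw : BS n1 × ((Fin (s + 1) → ZMod 2) × (Fin (s + 1) → ZMod 2)) =>
            ipPair (f xw.1) xw.2) (prodD μX μW))
         (uniformD (ZMod 2)) ≤ ε) :
    IsNME (fun x y => ipPair (f x) (e (ι y), e (ι y ^ 3))) (k:ℝ)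
      (64 * (2:ℝ) ^ (-(ℓ:ℝ)) + 8 * ε) :=
  stmt_9_general n1 k s ℓ ε hε0 K hK ι hι e f hf

end
end

section
/- Let r, n1, k, s, ℓ be natural numbers with ℓ > r, let ε ∈ (0,1), and set n2 = (r+1)(s+1). Fix an injective map ι : {0,1}^s → GF(2^{s+1}) \ {0} and a fixed F_2-linear identification of GF(2^{s+1}) with F_2^{s+1}, and define Enc_r : {0,1}^s → F_2^{n2} by Enc_r(y) = (ι(y), ι(y)³, ι(y)⁵, ..., ι(y)^{2r+1}). Suppose f : {0,1}^{n1} → F_2^{n2} is such that for every (n1,k)-source X and every independent distribution W on F_2^{n2} with min-entropy at least n2/(r+1) − ℓ, the bit ⟨f(X), W⟩ (inner product over F_2) is ε-close to uniform. Then the function nmExt : {0,1}^{n1} × {0,1}^s → {0,1} defined by nmExt(x,y) = ⟨f(x), Enc_r(y)⟩ is an (r, k, ε')-non-malleable extractor with ε' ≤ (r+1)·2^{r+4}·2^{−ℓ} + 2^{(3r+2)/2}·ε. -/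
open Finset
open scoped Classical

noncomputable section

/-- The inner product over `F_2` on `F_2^{r·s}` represented in `r` blocks of length `s`. -/
def ipBlocks {r s : ℕ} (v w : Fin r → Fin s → ZMod 2) : ZMod 2 :=
  ∑ j, ∑ i, v j i * w j i

/-!
By the XOR lemma, the output bit is close to uniform given the tampered bits and the seed as
soon as every parity `E(X, y) + ∑_{i ∈ T} E(X, A_i y)` is unbiased on average over `y`. By
linearity this parity is `⟨f(X), w_T(y)⟩`, where `w_T(y)` lists the odd power sums
`p₁, p₃, …, p_{2r+1}` of the multiset `{ι y} + {ι (A_i y) | i ∈ T}`. In characteristic 2 the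
odd power sums determine the even ones (`p_{2k} = p_k²`), and the power sums `p₁, …, p_{2r+2}`
of at most `2r + 2` distinct nonzero elements vanish only if there are none (Vandermonde); so
`w_T(y)` determines the set of elements of odd multiplicity, which contains `ι y`. Thus every
value of `w_T` is taken by at most `r + 1` seeds, so `w_T(Y)`, once a part of small mass is
discarded, has the min-entropy to which the hypothesis on `f` applies; this bounds each of the
`2^r` biases.
-/

namespace NonMalleable

lemma zmod_two_eq_zero_or_one (b : ZMod 2) : b = 0 ∨ b = 1 := by
  revert b; decide

lemma sum_zmod_two {M : Type*} [AddCommMonoid M] (g : ZMod 2 → M) : ∑ b, g b = g 0 + g 1 :=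
  Fin.sum_univ_two g

def chi : AddChar (ZMod 2) ℝ where
  toFun b := if b = 0 then 1 else -1
  map_zero_eq_one' := if_pos rfl
  map_add_eq_mul' a b := by
    rcases zmod_two_eq_zero_or_one a with rfl | rfl <;>
      rcases zmod_two_eq_zero_or_one b with rfl | rfl <;> simp [show (1 + 1 : ZMod 2) = 0 from rfl]

@[simp] lemma chi_one : chi 1 = -1 := rfl

lemma abs_chi (b : ZMod 2) : |chi b| = 1 := by
  rcases zmod_two_eq_zero_or_one b with rfl | rfl <;> simp

lemma chi_sum {ι : Type*} (s : Finset ι) (x : ι → ZMod 2) :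
    chi (∑ i ∈ s, x i) = ∏ i ∈ s, chi (x i) := by
  induction s using Finset.cons_induction with
  | empty => simp
  | cons a s ha ih => rw [sum_cons, prod_cons, AddChar.map_add_eq_mul, ih]

lemma sum_chi_mul (c : ZMod 2) : ∑ b, chi (b * c) = if c = 0 then 2 else 0 := by
  rcases zmod_two_eq_zero_or_one c with rfl | rfl <;> simp [sum_zmod_two]

lemma sum_chi_dotProduct {r : ℕ} (u : Fin r → ZMod 2) :
    ∑ t : Fin r → ZMod 2, chi (t ⬝ᵥ u) = if u = 0 then 2 ^ r else 0 := by
  simp_rw [dotProduct, chi_sum]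
  rw [← Fintype.prod_sum (fun i b => chi (b * u i))]
  simp_rw [sum_chi_mul, Finset.prod_ite_zero, prod_const, card_univ, Fintype.card_fin, funext_iff]
  simp

lemma walsh_inversion {r : ℕ} (h : (Fin r → ZMod 2) → ℝ) (v : Fin r → ZMod 2) :
    ∑ t, chi (t ⬝ᵥ v) * ∑ v', chi (t ⬝ᵥ v') * h v' = 2 ^ r * h v := by
  calc ∑ t, chi (t ⬝ᵥ v) * ∑ v', chi (t ⬝ᵥ v') * h v'
      = ∑ v', h v' * ∑ t, chi (t ⬝ᵥ (v + v')) := by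
        simp_rw [Finset.mul_sum, dotProduct_add, AddChar.map_add_eq_mul]
        rw [Finset.sum_comm]
        exact sum_congr rfl fun _ _ => sum_congr rfl fun _ _ => by ring
    _ = 2 ^ r * h v := by
        simp_rw [sum_chi_dotProduct, add_eq_zero_iff_eq_neg, ZModModule.neg_eq_self,
          eq_comm (a := v)]
        simp [mul_comm]

lemma sum_abs_le_sum_abs_walsh {r : ℕ} (h : (Fin r → ZMod 2) → ℝ) :
    ∑ v, |h v| ≤ ∑ t, |∑ v, chi (t ⬝ᵥ v) * h v| := by
  have hpos : (0 : ℝ) < 2 ^ r := by positivity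
  have hv : ∀ v, |h v| ≤ (2 ^ r)⁻¹ * ∑ t, |∑ v', chi (t ⬝ᵥ v') * h v'| := fun v => by
    rw [le_inv_mul_iff₀ hpos, ← abs_of_pos hpos, ← abs_mul, ← walsh_inversion]
    refine (abs_sum_le_sum_abs _ _).trans (le_of_eq (sum_congr rfl fun t _ => ?_))
    rw [abs_mul, abs_chi, one_mul]
  calc ∑ v, |h v| ≤ ∑ _v : Fin r → ZMod 2, (2 ^ r)⁻¹ * ∑ t, |∑ v', chi (t ⬝ᵥ v') * h v'| :=
        sum_le_sum fun v _ => hv v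
    _ = _ := by simp [hpos.ne']

section Distributions

variable {α β : Type*} [Fintype α]

lemma sum_pushD_mul [Fintype β] (F : α → β) (p : α → ℝ) (g : β → ℝ) :
    ∑ b, pushD F p b * g b = ∑ a, p a * g (F a) := by
  simp_rw [pushD, Finset.sum_mul, ite_mul, zero_mul]
  rw [Finset.sum_comm]
  simp

lemma sum_pushD [Fintype β] (F : α → β) (p : α → ℝ) : ∑ b, pushD F p b = ∑ a, p a := by
  simpa using sum_pushD_mul F p 1

lemma uniformD_nonneg (a : α) : 0 ≤ uniformD α a := by
  unfold uniformD
  positivity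

lemma sum_uniformD_le_one : ∑ a, uniformD α a ≤ 1 := by
  simp only [uniformD, sum_const, card_univ, nsmul_eq_mul]
  exact mul_inv_le_one

lemma pushD_pair_add (p : α → ℝ) (Z : α → ZMod 2) (G : α → β) (u : β) :
    pushD (fun a => (Z a, G a)) p (0, u) + pushD (fun a => (Z a, G a)) p (1, u) = pushD G p u := by
  simp_rw [pushD, ← sum_add_distrib]
  refine sum_congr rfl fun a _ => ?_
  rcases zmod_two_eq_zero_or_one (Z a) with h | h <;> simp [h]

lemma pushD_pair_sub (p : α → ℝ) (Z : α → ZMod 2) (G : α → β) (u : β) :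
    pushD (fun a => (Z a, G a)) p (0, u) - pushD (fun a => (Z a, G a)) p (1, u) =
      pushD G (fun a => p a * chi (Z a)) u := by
  simp_rw [pushD, ← sum_sub_distrib]
  refine sum_congr rfl fun a _ => ?_
  rcases zmod_two_eq_zero_or_one (Z a) with h | h <;> by_cases hu : G a = u <;> simp [h, hu]

lemma SD_pushD_prod_uniformD [Fintype β] (p : α → ℝ) (Z : α → ZMod 2) (G : α → β) :
    SD (pushD (fun a => (Z a, G a)) p) (prodD (uniformD (ZMod 2)) (pushD G p)) =
      (∑ u, |pushD G (fun a => p a * chi (Z a)) u|) / 2 := by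
  rw [SD, Fintype.sum_prod_type, sum_zmod_two, ← sum_add_distrib]
  congr 1
  refine sum_congr rfl fun u _ => ?_
  have hQ : ∀ b, prodD (uniformD (ZMod 2)) (pushD G p) (b, u) =
      (pushD (fun a => (Z a, G a)) p (0, u) + pushD (fun a => (Z a, G a)) p (1, u)) / 2 := by
    intro b
    rw [prodD, uniformD, ZMod.card, pushD_pair_add]
    push_cast
    ring
  rw [hQ, hQ, ← pushD_pair_sub]
  set P₀ := pushD (fun a => (Z a, G a)) p (0, u)
  set P₁ := pushD (fun a => (Z a, G a)) p (1, u)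
  rw [show P₀ - (P₀ + P₁) / 2 = (P₀ - P₁) / 2 by ring,
    show P₁ - (P₀ + P₁) / 2 = -((P₀ - P₁) / 2) by ring, abs_neg, abs_div]
  norm_num

lemma abs_sum_mul_chi_le_two_mul_SD (p : α → ℝ) (Z : α → ZMod 2) :
    |∑ a, p a * chi (Z a)| ≤ 2 * SD (pushD Z p) (uniformD (ZMod 2)) := by
  have hbias : ∑ a, p a * chi (Z a) = (pushD Z p 0 - 2⁻¹) - (pushD Z p 1 - 2⁻¹) := by
    simp_rw [sub_sub_sub_cancel_right, pushD, ← sum_sub_distrib]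
    refine sum_congr rfl fun a _ => ?_
    rcases zmod_two_eq_zero_or_one (Z a) with h | h <;> simp [h]
  rw [hbias, SD, sum_zmod_two]
  simp only [uniformD, ZMod.card]
  push_cast
  linarith [abs_sub (pushD Z p 0 - 2⁻¹) (pushD Z p 1 - 2⁻¹)]

lemma sum_chi_dotProduct_mul_pushD [Fintype β] {r : ℕ} (q : α → ℝ) (V : α → Fin r → ZMod 2)
    (Yf : α → β) (t : Fin r → ZMod 2) (y : β) :
    ∑ v, chi (t ⬝ᵥ v) * pushD (fun a => (V a, Yf a)) q (v, y) =
      pushD Yf (fun a => chi (t ⬝ᵥ V a) * q a) y := by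
  simp_rw [pushD, Finset.mul_sum, mul_ite, mul_zero, Prod.mk.injEq]
  rw [Finset.sum_comm]
  refine sum_congr rfl fun a _ => ?_
  by_cases hy : Yf a = y <;> simp [hy]

lemma SD_le_half_sum_abs_parity_bias [Fintype β] {r : ℕ} (p : α → ℝ) (Z : α → ZMod 2)
    (V : α → Fin r → ZMod 2) (Yf : α → β) :
    SD (pushD (fun a => (Z a, V a, Yf a)) p)
        (prodD (uniformD (ZMod 2)) (pushD (fun a => (V a, Yf a)) p)) ≤
      (∑ t : Fin r → ZMod 2, ∑ y, |pushD Yf (fun a => p a * chi (Z a + t ⬝ᵥ V a)) y|) / 2 := by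
  rw [SD_pushD_prod_uniformD p Z (fun a => (V a, Yf a)), Fintype.sum_prod_type_right,
    Finset.sum_comm (s := univ (α := Fin r → ZMod 2))]
  refine div_le_div_of_nonneg_right (sum_le_sum fun y _ => ?_) zero_le_two
  refine (sum_abs_le_sum_abs_walsh _).trans_eq (sum_congr rfl fun t _ => ?_)
  rw [sum_chi_dotProduct_mul_pushD]
  simp_rw [AddChar.map_add_eq_mul, mul_left_comm, mul_comm (chi (Z _))]

end Distributions

section CappedWeights

variable {W : Type*} [Fintype W] {ψ : W → ℝ} {cap θ δ : ℝ}

lemma abs_sum_mul_le_of_le_cap (hψ : ∀ ω, |ψ ω| ≤ 1) (hθ : 0 < θ) (hδ : 0 ≤ δ)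
    (hbias : ∀ ν : W → ℝ, IsDist ν → (∀ ω, ν ω ≤ cap) → |∑ ω, ν ω * ψ ω| ≤ δ)
    {μ : W → ℝ} (hμ0 : ∀ ω, 0 ≤ μ ω) (hμ1 : ∑ ω, μ ω ≤ 1) (hμcap : ∀ ω, μ ω ≤ θ * cap) :
    |∑ ω, μ ω * ψ ω| ≤ δ + θ := by
  set m := ∑ ω, μ ω
  rcases le_or_gt m θ with hm | hm
  · have hmass : |∑ ω, μ ω * ψ ω| ≤ m := (abs_sum_le_sum_abs _ _).trans <| sum_le_sum fun ω _ => by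
      rw [abs_mul, abs_of_nonneg (hμ0 ω)]
      exact mul_le_of_le_one_right (hμ0 ω) (hψ ω)
    linarith
  · -- renormalising `μ` to a distribution raises its maximum by at most the factor `1 / θ`
    have hm0 : 0 < m := hθ.trans hm
    have hν : IsDist fun ω => μ ω / m :=
      ⟨fun ω => div_nonneg (hμ0 ω) hm0.le, by rw [← sum_div, div_self hm0.ne']⟩
    have hνcap : ∀ ω, μ ω / m ≤ cap := fun ω =>
      (div_le_div_of_nonneg_left (hμ0 ω) hθ hm.le).trans ((div_le_iff₀' hθ).mpr (hμcap ω))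
    calc |∑ ω, μ ω * ψ ω| = m * |∑ ω, μ ω / m * ψ ω| := by
          simp_rw [div_mul_eq_mul_div, ← sum_div, abs_div, abs_of_pos hm0]
          field_simp
      _ ≤ 1 * δ := mul_le_mul hμ1 (hbias _ hν hνcap) (abs_nonneg _) zero_le_one
      _ ≤ δ + θ := by linarith

lemma sum_mul_abs_le_of_le_cap (hψ : ∀ ω, |ψ ω| ≤ 1) (hθ : 0 < θ) (hδ : 0 ≤ δ)
    (hbias : ∀ ν : W → ℝ, IsDist ν → (∀ ω, ν ω ≤ cap) → |∑ ω, ν ω * ψ ω| ≤ δ)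
    {μ : W → ℝ} (hμ0 : ∀ ω, 0 ≤ μ ω) (hμ1 : ∑ ω, μ ω ≤ 1) (hμcap : ∀ ω, μ ω ≤ θ * cap) :
    ∑ ω, μ ω * |ψ ω| ≤ 2 * (δ + θ) := by
  have hpart : ∀ (P : W → Prop) [DecidablePred P],
      |∑ ω, (if P ω then μ ω else 0) * ψ ω| ≤ δ + θ := fun P _ =>
    abs_sum_mul_le_of_le_cap hψ hθ hδ hbias (fun ω => by split_ifs <;> simp [hμ0 ω])
      ((sum_le_sum fun ω _ => by split_ifs <;> simp [hμ0 ω]).trans hμ1)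
      (fun ω => by split_ifs; exacts [hμcap ω, (hμ0 ω).trans (hμcap ω)])
  have hsplit : ∑ ω, μ ω * |ψ ω| = ∑ ω, (if 0 ≤ ψ ω then μ ω else 0) * ψ ω -
      ∑ ω, (if ¬ 0 ≤ ψ ω then μ ω else 0) * ψ ω := by
    rw [← sum_sub_distrib]
    refine sum_congr rfl fun ω _ => ?_
    by_cases h : 0 ≤ ψ ω
    · simp [h, abs_of_nonneg h]
    · simp [h, abs_of_neg (not_le.mp h)]
  have hpos : |∑ ω, (if 0 ≤ ψ ω then μ ω else 0) * ψ ω| ≤ δ + θ := hpart _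
  have hneg : |∑ ω, (if ¬ 0 ≤ ψ ω then μ ω else 0) * ψ ω| ≤ δ + θ := hpart _
  rw [hsplit]
  linarith [le_abs_self (∑ ω, (if 0 ≤ ψ ω then μ ω else 0) * ψ ω),
    neg_abs_le (∑ ω, (if ¬ 0 ≤ ψ ω then μ ω else 0) * ψ ω)]

end CappedWeights

lemma pushD_snd_prodD_uniformD {X Y : Type*} [Fintype X] [Fintype Y] (μX : X → ℝ)
    (g : X → Y → ℝ) (y : Y) :
    pushD Prod.snd (fun a : X × Y => prodD μX (uniformD Y) a * g a.1 a.2) y =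
      uniformD Y y * ∑ x, μX x * g x y := by
  simp only [pushD, prodD, Fintype.sum_prod_type_right]
  rw [Finset.sum_eq_single y (fun b _ hb => by simp [hb]) (by simp), Finset.mul_sum]
  simp only [if_true]
  exact sum_congr rfl fun x _ => by ring

lemma pushD_uniformD_le {Y W : Type*} [Fintype Y] [DecidableEq W] {N : ℕ} (w : Y → W)
    (hfib : ∀ ω, #{y | w y = ω} ≤ N) (ω : W) :
    pushD w (uniformD Y) ω ≤ N * (Fintype.card Y : ℝ)⁻¹ := by
  have hN : (#{y | w y = ω} : ℝ) ≤ N := by exact_mod_cast hfib ω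
  calc pushD w (uniformD Y) ω = ∑ y with w y = ω, (Fintype.card Y : ℝ)⁻¹ := by
        rw [sum_filter, pushD]
        congr! 2
    _ ≤ N * (Fintype.card Y : ℝ)⁻¹ := by
        rw [sum_const, nsmul_eq_mul]
        gcongr

theorem SD_tamper_le_of_parity_encoding {X Y W : Type*} [Fintype X] [Fintype Y] [Fintype W]
    [DecidableEq W] {r N : ℕ} {μX : X → ℝ} (hμX : IsDist μX) (E : X → Y → ZMod 2)
    (A : Fin r → Y → Y)
    (B : X → W → ZMod 2) (w : (Fin r → ZMod 2) → Y → W)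
    (hlin : ∀ t x y, E x y + t ⬝ᵥ (fun i => E x (A i y)) = B x (w t y))
    (hfib : ∀ t ω, #{y | w t y = ω} ≤ N)
    {cap θ δ : ℝ} (hθ : 0 < θ) (hδ : 0 ≤ δ) (hcap : N * (Fintype.card Y : ℝ)⁻¹ ≤ θ * cap)
    (hbias : ∀ ν : W → ℝ, IsDist ν → (∀ ω, ν ω ≤ cap) →
      |∑ ω, ν ω * ∑ x, μX x * chi (B x ω)| ≤ δ) :
    SD (pushD (fun xy : X × Y => (E xy.1 xy.2, fun i => E xy.1 (A i xy.2), xy.2))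
          (prodD μX (uniformD Y)))
       (prodD (uniformD (ZMod 2))
          (pushD (fun xy : X × Y => ((fun i => E xy.1 (A i xy.2)), xy.2))
            (prodD μX (uniformD Y)))) ≤ 2 ^ r * (δ + θ) := by
  set ψ : W → ℝ := fun ω => ∑ x, μX x * chi (B x ω)
  have hψ : ∀ ω, |ψ ω| ≤ 1 := fun ω => (abs_sum_le_sum_abs _ _).trans <| by
    simp_rw [abs_mul, abs_chi, mul_one, abs_of_nonneg (hμX.1 _), hμX.2, le_refl]
  have hmass : ∀ t, ∑ y, uniformD Y y * |ψ (w t y)| ≤ 2 * (δ + θ) := fun t => by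
    rw [← sum_pushD_mul (w t) (uniformD Y) (fun ω => |ψ ω|)]
    exact sum_mul_abs_le_of_le_cap hψ hθ hδ hbias
      (fun ω => sum_nonneg fun y _ => by split_ifs; exacts [uniformD_nonneg y, le_rfl])
      ((sum_pushD (w t) (uniformD Y)).trans_le sum_uniformD_le_one)
      (fun ω => (pushD_uniformD_le (w t) (hfib t) ω).trans hcap)
  refine (SD_le_half_sum_abs_parity_bias (prodD μX (uniformD Y)) (fun a => E a.1 a.2)
    (fun a i => E a.1 (A i a.2)) Prod.snd).trans ?_
  calc _ = (∑ t : Fin r → ZMod 2, ∑ y, uniformD Y y * |ψ (w t y)|) / 2 := by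
        refine congrArg (· / 2) (sum_congr rfl fun t _ => sum_congr rfl fun y _ => ?_)
        have h := pushD_snd_prodD_uniformD μX (fun x y => chi (E x y + t ⬝ᵥ fun i => E x (A i y))) y
        beta_reduce at h
        simp_rw [h, hlin, abs_mul, abs_of_nonneg (uniformD_nonneg y)]
        rfl
    _ ≤ (∑ _t : Fin r → ZMod 2, 2 * (δ + θ)) / 2 := by gcongr with t; exact hmass t
    _ = 2 ^ r * (δ + θ) := by simp; ring

section OddPowerSums

variable {α K : Type*}

def oddPart (m : Multiset α) : Finset α := m.toFinset.filter fun a => Odd (m.count a)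

lemma mem_oddPart {m : Multiset α} {a : α} : a ∈ oddPart m ↔ Odd (m.count a) := by
  simp only [oddPart, mem_filter, Multiset.mem_toFinset, and_iff_right_iff_imp]
  exact fun h => Multiset.count_pos.mp h.pos

lemma card_oddPart_le (m : Multiset α) : #(oddPart m) ≤ Multiset.card m :=
  (card_filter_le _ _).trans (Multiset.toFinset_card_le m)

lemma sum_oddPart [CommRing K] [CharP K 2] (m : Multiset α) (g : α → K) :
    ∑ a ∈ oddPart m, g a = (m.map g).sum := by
  rw [Finset.sum_multiset_map_count, oddPart, sum_filter]
  refine sum_congr rfl fun a _ => ?_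
  rw [nsmul_eq_mul, CharTwo.natCast_eq_ite]
  by_cases h : Odd (m.count a)
  · simp [h, Nat.not_even_iff_odd.mpr h]
  · simp [h, Nat.not_odd_iff_even.mp h]

lemma eq_empty_of_sum_pow_succ_eq_zero [Field K] {D : Finset K} (h0 : (0 : K) ∉ D)
    (hD : ∀ m < #D, ∑ a ∈ D, a ^ (m + 1) = 0) : D = ∅ := by
  set f : Fin #D → K := fun i => D.equivFin.symm i
  have hf : Function.Injective f := Subtype.val_injective.comp D.equivFin.symm.injective
  have hsum : ∀ g : K → K, ∑ j, g (f j) = ∑ a ∈ D, g a := fun g =>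
    (Equiv.sum_comp D.equivFin.symm fun a : D => g a).trans (D.sum_coe_sort g)
  have hf0 : f = 0 := Matrix.eq_zero_of_forall_pow_sum_mul_pow_eq_zero hf fun i => by
    simp_rw [← pow_succ', hsum fun a => a ^ ((i : ℕ) + 1), hD i i.2]
  by_contra hne
  have i : Fin #D := ⟨0, card_pos.mpr (nonempty_iff_ne_empty.mpr hne)⟩
  have hi : f i = 0 := congrFun hf0 i
  exact h0 (hi ▸ (D.equivFin.symm i).2)

lemma sum_pow_eq_zero_of_sum_odd_pow_eq_zero [CommRing K] [CharP K 2] {D : Finset K} {n : ℕ}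
    (hodd : ∀ j < n, ∑ a ∈ D, a ^ (2 * j + 1) = 0) :
    ∀ m, 0 < m → m ≤ 2 * n → ∑ a ∈ D, a ^ m = 0 := by
  intro m
  induction m using Nat.strong_induction_on with
  | _ m ih =>
    intro hm hmn
    obtain ⟨k, rfl | rfl⟩ := Nat.even_or_odd' m
    · rw [show ∑ a ∈ D, a ^ (2 * k) = (∑ a ∈ D, a ^ k) ^ 2 by
        simp_rw [sum_pow_char, ← pow_mul, mul_comm], ih k (by omega) (by omega) (by omega)]
      simp
    · exact hodd k (by omega)

theorem oddPart_eq_of_sum_odd_pow_eq [Field K] [CharP K 2] {n : ℕ} {m₁ m₂ : Multiset K}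
    (h0₁ : (0 : K) ∉ m₁) (h0₂ : (0 : K) ∉ m₂)
    (hcard₁ : Multiset.card m₁ ≤ n) (hcard₂ : Multiset.card m₂ ≤ n)
    (hsum : ∀ j < n, (m₁.map (· ^ (2 * j + 1))).sum = (m₂.map (· ^ (2 * j + 1))).sum) :
    oddPart m₁ = oddPart m₂ := by
  have hD : oddPart (m₁ + m₂) = ∅ := by
    refine eq_empty_of_sum_pow_succ_eq_zero (fun h => ?_) fun m hm => ?_
    · rw [mem_oddPart, Multiset.count_eq_zero.mpr (by simp [h0₁, h0₂])] at h
      exact Nat.not_odd_zero h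
    · have hcard := (card_oddPart_le (m₁ + m₂)).trans_eq (Multiset.card_add m₁ m₂)
      refine sum_pow_eq_zero_of_sum_odd_pow_eq_zero (n := n) (fun j hj => ?_) _ (by omega)
        (by omega)
      rw [sum_oddPart, Multiset.map_add, Multiset.sum_add, hsum j hj, CharTwo.add_self_eq_zero]
  ext a
  have h : ¬ Odd ((m₁ + m₂).count a) := by
    rw [← mem_oddPart, hD]
    exact notMem_empty a
  simp only [Multiset.count_add, Nat.odd_add, ← Nat.not_odd_iff_even] at h
  simp only [mem_oddPart]
  tauto

theorem card_filter_le_of_sum_odd_pow [Field K] [CharP K 2] {Y W : Type*} [Fintype Y]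
    [DecidableEq W] {n : ℕ}
    {ι : Y → K} (hι : Function.Injective ι) (m : Y → Multiset K) (h0 : ∀ y, (0 : K) ∉ m y)
    (hcard : ∀ y, Multiset.card (m y) ≤ n) (hodd : ∀ y, Odd ((m y).count (ι y))) (w : Y → W)
    (hw : ∀ y y', w y = w y' →
      ∀ j < n, ((m y).map (· ^ (2 * j + 1))).sum = ((m y').map (· ^ (2 * j + 1))).sum)
    (ω : W) : #{y | w y = ω} ≤ n := by
  rcases (univ.filter fun y => w y = ω).eq_empty_or_nonempty with hempty | ⟨y₀, hy₀⟩
  · simp [hempty]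
  have hmaps : ∀ y ∈ univ.filter (w · = ω), ι y ∈ oddPart (m y₀) := fun y hy => by
    rw [← oddPart_eq_of_sum_odd_pow_eq (h0 y) (h0 y₀) (hcard y) (hcard y₀)
      (hw y y₀ ((mem_filter.1 hy).2.trans (mem_filter.1 hy₀).2.symm)), mem_oddPart]
    exact hodd y
  calc _ ≤ #(oddPart (m y₀)) := card_le_card_of_injOn ι hmaps hι.injOn
    _ ≤ n := (card_oddPart_le _).trans (hcard y₀)

end OddPowerSums

lemma charP_two_of_addEquiv {R M : Type*} [Ring R] [Nontrivial R] [AddCommGroup M]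
    [Module (ZMod 2) M] (e : R ≃+ M) : CharP R 2 :=
  CharTwo.of_one_ne_zero_of_two_eq_zero one_ne_zero <| e.injective <| by
    rw [map_zero, ← one_add_one_eq_two, map_add, ZModModule.add_self]

lemma ipBlocks_add_right {a b : ℕ} (v w₁ w₂ : Fin a → Fin b → ZMod 2) :
    ipBlocks v (w₁ + w₂) = ipBlocks v w₁ + ipBlocks v w₂ := by
  simp only [ipBlocks, Pi.add_apply, mul_add, sum_add_distrib]

lemma ipBlocks_sum_right {a b : ℕ} {ι : Type*} (v : Fin a → Fin b → ZMod 2) (s : Finset ι)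
    (w : ι → Fin a → Fin b → ZMod 2) : ipBlocks v (∑ i ∈ s, w i) = ∑ i ∈ s, ipBlocks v (w i) :=
  map_sum (AddMonoidHom.mk' (ipBlocks v) (ipBlocks_add_right v)) w s

lemma dotProduct_eq_sum_filter {r : ℕ} (t b : Fin r → ZMod 2) :
    t ⬝ᵥ b = ∑ i ∈ univ.filter (t · = 1), b i := by
  rw [sum_filter, dotProduct]
  refine sum_congr rfl fun i _ => ?_
  rcases zmod_two_eq_zero_or_one (t i) with h | h <;> simp [h]

lemma abs_sum_mul_sum_chi_le_two_mul_SD {X W : Type*} [Fintype X] [Fintype W] (μX : X → ℝ)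
    (ν : W → ℝ) (B : X → W → ZMod 2) :
    |∑ ω, ν ω * ∑ x, μX x * chi (B x ω)| ≤
      2 * SD (pushD (fun xw : X × W => B xw.1 xw.2) (prodD μX ν)) (uniformD (ZMod 2)) := by
  convert abs_sum_mul_chi_le_two_mul_SD (prodD μX ν) (fun xw : X × W => B xw.1 xw.2) using 2
  rw [Fintype.sum_prod_type_right]
  simp_rw [mul_sum, prodD]
  exact sum_congr rfl fun ω _ => sum_congr rfl fun x _ => by ring

section OddPowerEncoding

variable {K : Type*} [Field K] {s : ℕ} (e : K ≃+ (Fin (s + 1) → ZMod 2))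

def oddPowEnc (r : ℕ) (a : K) : Fin (r + 1) → Fin (s + 1) → ZMod 2 :=
  fun j => e (a ^ (2 * (j : ℕ) + 1))

theorem card_filter_oddPowEnc_tamper_le {Y : Type*} [Fintype Y] {r : ℕ} {ι : Y → K}
    (hι : Function.Injective ι) (hι0 : ∀ y, ι y ≠ 0) {A : Fin r → Y → Y}
    (hA : ∀ i y, A i y ≠ y) (T : Finset (Fin r)) (ω : Fin (r + 1) → Fin (s + 1) → ZMod 2) :
    #{y | oddPowEnc e r (ι y) + ∑ i ∈ T, oddPowEnc e r (ι (A i y)) = ω} ≤ r + 1 := by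
  have := charP_two_of_addEquiv e
  refine card_filter_le_of_sum_odd_pow hι (fun y => ι y ::ₘ T.val.map fun i => ι (A i y))
    (fun y => ?_) (fun y => ?_) (fun y => ?_) _ (fun y y' hyy' j hj => ?_) ω
  · simp [hι0, eq_comm (a := (0 : K))]
  · simpa using card_le_univ T
  · rw [Multiset.count_cons_self, Multiset.count_eq_zero.mpr (by simp [hι.eq_iff, hA])]
    exact odd_one
  · apply e.injective
    simpa [oddPowEnc, Multiset.map_map] using congrFun hyy' ⟨j, hj⟩

end OddPowerEncoding

lemma two_pow_mul_le_nme_error (r ℓ : ℕ) {ε : ℝ} (hε : 0 ≤ ε) :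
    2 ^ r * (2 * ε + ((r : ℝ) + 1) * 2 ^ ((1 : ℝ) - ℓ)) ≤
      ((r : ℝ) + 1) * 2 ^ ((r : ℝ) + 4) * 2 ^ (-(ℓ : ℝ)) + 2 ^ ((3 * (r : ℝ) + 2) / 2) * ε := by
  have h2r : (2 : ℝ) ^ r = 2 ^ (r : ℝ) := (Real.rpow_natCast 2 r).symm
  have hε' : (2 : ℝ) ^ r * (2 * ε) ≤ 2 ^ ((3 * (r : ℝ) + 2) / 2) * ε := by
    rw [← mul_assoc, h2r, ← Real.rpow_add_one two_ne_zero]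
    gcongr
    · exact one_le_two
    · linarith [(r.cast_nonneg : (0 : ℝ) ≤ r)]
  have hθ' : (2 : ℝ) ^ r * (((r : ℝ) + 1) * 2 ^ ((1 : ℝ) - ℓ)) ≤
      ((r : ℝ) + 1) * 2 ^ ((r : ℝ) + 4) * 2 ^ (-(ℓ : ℝ)) := by
    rw [h2r, mul_left_comm, ← Real.rpow_add two_pos, mul_assoc, ← Real.rpow_add two_pos]
    exact mul_le_mul_of_nonneg_left
      (Real.rpow_le_rpow_of_exponent_le one_le_two (by linarith)) (by positivity)
  linarith [mul_add ((2 : ℝ) ^ r) (2 * ε) (((r : ℝ) + 1) * 2 ^ ((1 : ℝ) - ℓ))]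

lemma succ_mul_inv_card_BS_eq (r s ℓ : ℕ) :
    ((r + 1 : ℕ) : ℝ) * (Fintype.card (BS s) : ℝ)⁻¹ = ((r : ℝ) + 1) * 2 ^ ((1 : ℝ) - ℓ) *
      2 ^ (-((((r : ℝ) + 1) * ((s : ℝ) + 1)) / ((r : ℝ) + 1) - ℓ)) := by
  have hs : ((r : ℝ) + 1) * ((s : ℝ) + 1) / ((r : ℝ) + 1) = s + 1 := by field_simp
  rw [hs, mul_assoc, ← Real.rpow_add two_pos, show (1 : ℝ) - ℓ + -(s + 1 - ℓ) = -s by ring,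
    Real.rpow_neg zero_le_two, Real.rpow_natCast]
  simp [BS]

end NonMalleable

open NonMalleable in
/-- `K` plays the role of `GF(2^{s+1})`, `e` is the `F_2`-linear identification of `K` with
`F_2^{s+1}`, and `F_2^{n2}` (with `n2 = (r+1)(s+1)`) is represented as `r+1` blocks `F_2^{s+1}`;
`Enc_r(y) = (ι(y), ι(y)³, …, ι(y)^{2r+1})`. -/
theorem stmt_10_general
    (r n1 k s ℓ : ℕ) (ε : ℝ) (hε0 : 0 < ε)
    (K : Type) [Field K]
    (ι : BS s → K) (hι : Function.Injective ι) (hι0 : ∀ y, ι y ≠ 0)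
    (e : K ≃+ (Fin (s + 1) → ZMod 2))
    (f : BS n1 → (Fin (r + 1) → Fin (s + 1) → ZMod 2))
    (hf : ∀ (μX : BS n1 → ℝ) (μW : (Fin (r + 1) → Fin (s + 1) → ZMod 2) → ℝ),
      IsDist μX → mEntGe μX (k:ℝ) → IsDist μW →
      mEntGe μW ((((r:ℝ) + 1) * ((s:ℝ) + 1)) / ((r:ℝ) + 1) - (ℓ:ℝ)) →
      SD (pushD (fun xw : BS n1 × (Fin (r + 1) → Fin (s + 1) → ZMod 2) =>
            ipBlocks (f xw.1) xw.2) (prodD μX μW))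
         (uniformD (ZMod 2)) ≤ ε) :
    IsNMEr r (fun x y => ipBlocks (f x) (fun j => e (ι y ^ (2 * (j:ℕ) + 1)))) (k:ℝ)
      (((r:ℝ) + 1) * (2:ℝ) ^ ((r:ℝ) + 4) * (2:ℝ) ^ (-(ℓ:ℝ))
        + (2:ℝ) ^ ((3 * (r:ℝ) + 2) / 2) * ε) := by
  intro μX hμX hμXk A hA
  have hbias : ∀ ν, IsDist ν → (∀ ω, ν ω ≤ _) →
      |∑ ω, ν ω * ∑ x, μX x * chi (ipBlocks (f x) ω)| ≤ 2 * ε := fun ν hν hνcap =>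
    (abs_sum_mul_sum_chi_le_two_mul_SD μX ν _).trans
      (mul_le_mul_of_nonneg_left (hf μX ν hμX hμXk hν hνcap) zero_le_two)
  refine (SD_tamper_le_of_parity_encoding hμX
    (fun x y => ipBlocks (f x) (oddPowEnc e r (ι y))) A (fun x ω => ipBlocks (f x) ω)
    (fun t y => oddPowEnc e r (ι y) + ∑ i ∈ univ.filter (t · = 1), oddPowEnc e r (ι (A i y)))
    (fun t x y => ?_) (fun t => card_filter_oddPowEnc_tamper_le e hι hι0 hA _)
    (by positivity) (by positivity) (succ_mul_inv_card_BS_eq r s ℓ).le hbias).trans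
    (two_pow_mul_le_nme_error r ℓ hε0.le)
  rw [ipBlocks_add_right, ipBlocks_sum_right, dotProduct_eq_sum_filter]

/-- Here `K` plays the role of `GF(2^{s+1})` (any field of that cardinality),
`e` is the fixed `F_2`-linear identification of `K` with `F_2^{s+1}`, and
`F_2^{n2}` (with `n2 = (r+1)(s+1)`) is represented as `r+1` blocks `F_2^{s+1}`;
`Enc_r(y) = (ι(y), ι(y)³, …, ι(y)^{2r+1})`. -/
theorem stmt_10
    (r n1 k s ℓ : ℕ) (hrℓ : r < ℓ) (ε : ℝ) (hε0 : 0 < ε) (hε1 : ε < 1)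
    (K : Type) [Field K] [Fintype K] (hK : Fintype.card K = 2 ^ (s + 1))
    (ι : BS s → K) (hι : Function.Injective ι) (hι0 : ∀ y, ι y ≠ 0)
    (e : K ≃+ (Fin (s + 1) → ZMod 2))
    (f : BS n1 → (Fin (r + 1) → Fin (s + 1) → ZMod 2))
    (hf : ∀ (μX : BS n1 → ℝ) (μW : (Fin (r + 1) → Fin (s + 1) → ZMod 2) → ℝ),
      IsDist μX → mEntGe μX (k:ℝ) → IsDist μW →
      mEntGe μW ((((r:ℝ) + 1) * ((s:ℝ) + 1)) / ((r:ℝ) + 1) - (ℓ:ℝ)) →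
      SD (pushD (fun xw : BS n1 × (Fin (r + 1) → Fin (s + 1) → ZMod 2) =>
            ipBlocks (f xw.1) xw.2) (prodD μX μW))
         (uniformD (ZMod 2)) ≤ ε) :
    IsNMEr r (fun x y => ipBlocks (f x) (fun j => e (ι y ^ (2 * (j:ℕ) + 1)))) (k:ℝ)
      (((r:ℝ) + 1) * (2:ℝ) ^ ((r:ℝ) + 4) * (2:ℝ) ^ (-(ℓ:ℝ))
        + (2:ℝ) ^ ((3 * (r:ℝ) + 2) / 2) * ε) :=
  stmt_10_general r n1 k s ℓ ε hε0 K ι hι hι0 e f hf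

end
end
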